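/- arXiv:1704.07081 — 8 statements merged into one kernel-verified Lean document; each statement's English description precedes it below -/
import Mathlib

section
/- For natural numbers m and any smooth (C^∞) function φ : ℝ → ℝ, the identity D^m[(x+1)^{2m} · D^m φ(x)] = (x+1)^m · D^{2m}[(x+1)^m · φ(x)] holds for all real x, where D denotes differentiation with respect to x and D^k the k-th iterated derivative. -/
open Finset

-- iterated derivative of (x+1)^N
lemma pow_iter_deriv (N : ℕ) : ∀ (j : ℕ),
    deriv^[j] (fun t : ℝ => (t + 1) ^ N)
      = fun x => (Nat.descFactorial N j : ℝ) * (x + 1) ^ (N - j) := by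
  intro j
  induction j with
  | zero => simp
  | succ j ih =>
    rw [Function.iterate_succ_apply', ih]
    funext x
    have h : HasDerivAt (fun y : ℝ => (Nat.descFactorial N j : ℝ) * (y + 1) ^ (N - j))
        ((Nat.descFactorial N j : ℝ) * ((N - j : ℕ) * (x + 1) ^ (N - j - 1) * 1)) x := by
      exact (((hasDerivAt_id x).add_const 1).pow (N - j)).const_mul _
    rw [h.deriv, Nat.descFactorial_succ]
    have : N - j - 1 = N - (j + 1) := by omega
    rw [this]
    push_cast
    ring

lemma comb (a b : ℕ → ℝ) (n : ℕ) :
    ∑ k ∈ range (n + 1), (n.choose k : ℝ) * (a (n - k + 1) * b k)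
      + ∑ k ∈ range (n + 1), (n.choose k : ℝ) * (a (n - k) * b (k + 1))
    = ∑ k ∈ range (n + 2), ((n + 1).choose k : ℝ) * (a (n + 1 - k) * b k) := by
  rw [Finset.sum_range_succ' (fun k => ((n + 1).choose k : ℝ) * (a (n + 1 - k) * b k)) (n + 1)]
  rw [Finset.sum_range_succ' (fun k => (n.choose k : ℝ) * (a (n - k + 1) * b k)) n]
  simp only [Nat.choose_zero_right, Nat.cast_one, Nat.sub_zero]
  have e1 : ∀ k ∈ range (n + 1),
      (((n + 1).choose (k + 1) : ℝ)) * (a (n + 1 - (k + 1)) * b (k + 1))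
        = (n.choose k : ℝ) * (a (n - k) * b (k + 1))
          + (n.choose (k + 1) : ℝ) * (a (n - k) * b (k + 1)) := by
    intro k hk
    rw [Nat.choose_succ_succ]
    have : n + 1 - (k + 1) = n - k := by omega
    rw [this]
    push_cast
    ring
  rw [Finset.sum_congr rfl e1, Finset.sum_add_distrib]
  have e2 : ∑ k ∈ range (n + 1), (n.choose (k + 1) : ℝ) * (a (n - k) * b (k + 1))
      = ∑ k ∈ range n, (n.choose (k + 1) : ℝ) * (a (n - (k + 1) + 1) * b (k + 1)) := by
    rw [Finset.sum_range_succ, Nat.choose_succ_self]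
    simp only [Nat.cast_zero, zero_mul, add_zero]
    refine Finset.sum_congr rfl fun k hk => ?_
    rw [mem_range] at hk
    have h : n - (k + 1) + 1 = n - k := by omega
    rw [h]
  rw [e2]
  ring

lemma leibniz (f g : ℝ → ℝ) (hf : ContDiff ℝ (⊤ : ℕ∞) f) (hg : ContDiff ℝ (⊤ : ℕ∞) g) (n : ℕ) (x : ℝ) :
    deriv^[n] (fun t => f t * g t) x
      = ∑ k ∈ range (n + 1), (n.choose k : ℝ) * (deriv^[n - k] f x * deriv^[k] g x) := by
  induction n generalizing x with
  | zero => simp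
  | succ n ih =>
    rw [Function.iterate_succ_apply']
    have hfn : ∀ k, Differentiable ℝ (deriv^[k] f) := fun k =>
      (hf.iterate_deriv k).differentiable (by simp)
    have hgn : ∀ k, Differentiable ℝ (deriv^[k] g) := fun k =>
      (hg.iterate_deriv k).differentiable (by simp)
    have hmain : deriv^[n] (fun t => f t * g t)
        = fun y => ∑ k ∈ range (n + 1), (n.choose k : ℝ) * (deriv^[n - k] f y * deriv^[k] g y) :=
      funext fun y => ih y
    rw [hmain]
    rw [deriv_fun_sum (fun k _ => by
      exact (((hfn (n - k)).differentiableAt.mul (hgn k).differentiableAt).const_mul _))]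
    have hterm : ∀ k ∈ range (n + 1),
        deriv (fun y => (n.choose k : ℝ) * (deriv^[n - k] f y * deriv^[k] g y)) x
          = (n.choose k : ℝ) * (deriv^[n - k + 1] f x * deriv^[k] g x)
            + (n.choose k : ℝ) * (deriv^[n - k] f x * deriv^[k + 1] g x) := by
      intro k _
      rw [deriv_const_mul _ ((hfn (n - k)).differentiableAt.fun_mul (hgn k).differentiableAt),
        deriv_fun_mul (hfn (n - k)).differentiableAt (hgn k).differentiableAt]
      rw [← Function.iterate_succ_apply' deriv (n - k) f,
        ← Function.iterate_succ_apply' deriv k g]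
      ring
    rw [Finset.sum_congr rfl hterm, Finset.sum_add_distrib]
    exact comb (fun k => deriv^[k] f x) (fun k => deriv^[k] g x) n

lemma coeff_id (m k : ℕ) (hk : k ≤ m) :
    m.choose k * (2 * m).descFactorial (m - k)
      = (2 * m).choose (m + k) * m.descFactorial (m - k) := by
  rw [Nat.descFactorial_eq_factorial_mul_choose, Nat.descFactorial_eq_factorial_mul_choose]
  have h1 : (2 * m).choose (m - k) = (2 * m).choose (m + k) := by
    have := Nat.choose_symm (show m + k ≤ 2 * m by omega) (n := 2 * m)
    have h2 : 2 * m - (m + k) = m - k := by omega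
    rw [h2] at this
    omega
  have h3 : m.choose (m - k) = m.choose k := Nat.choose_symm hk
  rw [h1, h3]
  ring

theorem stmt0 (m : ℕ) (φ : ℝ → ℝ) (hφ : ContDiff ℝ (⊤ : ℕ∞) φ) (x : ℝ) :
    deriv^[m] (fun t => (t + 1) ^ (2 * m) * deriv^[m] φ t) x
      = (x + 1) ^ m * deriv^[2 * m] (fun t => (t + 1) ^ m * φ t) x := by
  have hphi : ContDiff ℝ (⊤ : ℕ∞) φ := hφ.of_le (by simp)
  have hpow : ∀ N : ℕ, ContDiff ℝ (⊤ : ℕ∞) (fun t : ℝ => (t + 1) ^ N) := fun N =>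
    (contDiff_id.add contDiff_const).pow N
  rw [leibniz _ _ (hpow (2 * m)) (hphi.iterate_deriv m) m x,
    leibniz _ _ (hpow m) hphi (2 * m) x]
  have hsplit : ∑ k ∈ Finset.range (2 * m + 1),
      ((2 * m).choose k : ℝ) * (deriv^[2 * m - k] (fun t : ℝ => (t + 1) ^ m) x * deriv^[k] φ x)
      = ∑ j ∈ Finset.range (m + 1),
      ((2 * m).choose (m + j) : ℝ)
        * (deriv^[2 * m - (m + j)] (fun t : ℝ => (t + 1) ^ m) x * deriv^[m + j] φ x) := by
    rw [Finset.range_eq_Ico,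
      ← Finset.sum_Ico_consecutive _ (Nat.zero_le m) (by omega : m ≤ 2 * m + 1)]
    have h0 : ∑ k ∈ Finset.Ico 0 m,
        ((2 * m).choose k : ℝ) * (deriv^[2 * m - k] (fun t : ℝ => (t + 1) ^ m) x
          * deriv^[k] φ x) = 0 := by
      refine Finset.sum_eq_zero fun k hk => ?_
      rw [Finset.mem_Ico] at hk
      rw [pow_iter_deriv]
      have : m.descFactorial (2 * m - k) = 0 := by
        rw [Nat.descFactorial_eq_zero_iff_lt]; omega
      simp [this]
    rw [h0, zero_add, Finset.sum_Ico_eq_sum_range]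
    have : 2 * m + 1 - m = m + 1 := by omega
    rw [this]
  rw [hsplit, Finset.mul_sum]
  refine Finset.sum_congr rfl fun j hj => ?_
  rw [Finset.mem_range] at hj
  have hjm : j ≤ m := by omega
  rw [pow_iter_deriv, pow_iter_deriv]
  have e1 : 2 * m - (m - j) = m + j := by omega
  have e2 : 2 * m - (m + j) = m - j := by omega
  have e3 : m - (m - j) = j := by omega
  rw [e1, e2, e3]
  have e4 : deriv^[j] (deriv^[m] φ) x = deriv^[m + j] φ x := by
    rw [Nat.add_comm m j, Function.iterate_add_apply]
  rw [e4]
  have hc : (m.choose j : ℝ) * ((2 * m).descFactorial (m - j) : ℝ)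
      = ((2 * m).choose (m + j) : ℝ) * (m.descFactorial (m - j) : ℝ) := by
    exact_mod_cast coeff_id m j hjm
  beta_reduce
  rw [pow_add]
  linear_combination ((x + 1) ^ m * (x + 1) ^ j * deriv^[m + j] φ x) * hc
end

section
/- Let δ denote the Bessel derivative (δ f)(ξ) = ξ^{-1} f'(ξ). For every m ∈ ℕ and every smooth function φ on (0, ∞), one has δ^m[ξ^{2m+1} · δ^{m+1} φ(ξ)] = D^{2m+1} φ(ξ) for all ξ > 0. -/
open Set Filter

/-- The Bessel derivative `(δ f)(ξ) = ξ⁻¹ f'(ξ)`. -/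
noncomputable def besselD (f : ℝ → ℝ) : ℝ → ℝ := fun ξ => deriv f ξ / ξ

namespace BesselAux

/-- Multiplication by `t ^ n`. -/
def P (n : ℕ) (f : ℝ → ℝ) : ℝ → ℝ := fun t => t ^ n * f t

/-- Smooth on `(0, ∞)`. -/
def Sm (f : ℝ → ℝ) : Prop := ContDiffOn ℝ (⊤ : ℕ∞) f (Ioi 0)

lemma sm_deriv {f : ℝ → ℝ} (hf : Sm f) : Sm (deriv f) :=
  ((contDiffOn_infty_iff_deriv_of_isOpen isOpen_Ioi).1 hf).2

lemma sm_besselD {f : ℝ → ℝ} (hf : Sm f) : Sm (besselD f) :=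
  (sm_deriv hf).div contDiffOn_id (fun x hx => ne_of_gt hx)

lemma sm_iter {f : ℝ → ℝ} (hf : Sm f) (k : ℕ) : Sm (besselD^[k] f) := by
  induction k with
  | zero => exact hf
  | succ k ih => rw [Function.iterate_succ_apply']; exact sm_besselD ih

lemma sm_P {f : ℝ → ℝ} (hf : Sm f) (n : ℕ) : Sm (P n f) :=
  ((contDiff_id.pow n).contDiffOn).mul hf

lemma sm_id_mul {f : ℝ → ℝ} (hf : Sm f) : Sm (fun t => t * f t) :=
  contDiffOn_id.mul hf

lemma diffAt {f : ℝ → ℝ} (hf : Sm f) {ξ : ℝ} (hξ : ξ ∈ Ioi (0:ℝ)) : DifferentiableAt ℝ f ξ :=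
  (hf.contDiffAt (isOpen_Ioi.mem_nhds hξ)).differentiableAt (by simp)

lemma deriv_congr' {f g : ℝ → ℝ} (h : EqOn f g (Ioi 0)) {ξ} (hξ : ξ ∈ Ioi (0:ℝ)) :
    deriv f ξ = deriv g ξ :=
  (Filter.eventuallyEq_of_mem (isOpen_Ioi.mem_nhds hξ) h).deriv_eq

lemma besselD_congr {f g : ℝ → ℝ} (h : EqOn f g (Ioi 0)) :
    EqOn (besselD f) (besselD g) (Ioi 0) := fun ξ hξ => by
  unfold besselD; rw [deriv_congr' h hξ]

lemma iter_congr {f g : ℝ → ℝ} (h : EqOn f g (Ioi 0)) (k : ℕ) :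
    EqOn (besselD^[k] f) (besselD^[k] g) (Ioi 0) := by
  induction k with
  | zero => exact h
  | succ k ih =>
    rw [Function.iterate_succ_apply', Function.iterate_succ_apply']
    exact besselD_congr ih

lemma deriv2_congr {f g : ℝ → ℝ} (h : EqOn f g (Ioi 0)) {ξ} (hξ : ξ ∈ Ioi (0:ℝ)) :
    deriv (deriv f) ξ = deriv (deriv g) ξ :=
  deriv_congr' (fun x hx => deriv_congr' h hx) hξ

lemma deriv_P {f : ℝ → ℝ} (hf : Sm f) (n : ℕ) {ξ} (hξ : ξ ∈ Ioi (0:ℝ)) :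
    deriv (P n f) ξ = n * ξ ^ (n - 1) * f ξ + ξ ^ n * deriv f ξ := by
  unfold P
  rw [deriv_fun_mul (differentiableAt_pow n) (diffAt hf hξ), deriv_pow_field]

lemma besselD_P {f : ℝ → ℝ} (hf : Sm f) (n : ℕ) :
    EqOn (besselD (P (n + 2) f))
      (fun t => ((n : ℝ) + 2) * P n f t + P (n + 1) (deriv f) t) (Ioi 0) := by
  intro ξ hξ
  have hξ0 : ξ ≠ 0 := ne_of_gt hξ
  show deriv (P (n + 2) f) ξ / ξ = _
  rw [deriv_P hf (n + 2) hξ]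
  simp only [P, Nat.add_sub_cancel]
  push_cast
  field_simp
  ring

lemma iter_lin (k : ℕ) : ∀ f g, Sm f → Sm g → ∀ c : ℝ,
    EqOn (besselD^[k] (fun t => c * f t + g t))
      (fun t => c * besselD^[k] f t + besselD^[k] g t) (Ioi 0) := by
  induction k with
  | zero => intro f g _ _ c ξ _; simp
  | succ k ih =>
    intro f g hf hg c ξ hξ
    have h1 : EqOn (besselD (fun t => c * f t + g t))
        (fun t => c * besselD f t + besselD g t) (Ioi 0) := by
      intro x hx
      show deriv _ x / x = _
      rw [deriv_fun_add ((diffAt hf hx).const_mul c) (diffAt hg hx),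
        deriv_const_mul c (diffAt hf hx)]
      unfold besselD
      ring
    rw [Function.iterate_succ_apply, Function.iterate_succ_apply, Function.iterate_succ_apply]
    calc besselD^[k] (besselD fun t => c * f t + g t) ξ
        = besselD^[k] (fun t => c * besselD f t + besselD g t) ξ := iter_congr h1 k hξ
      _ = c * besselD^[k] (besselD f) ξ + besselD^[k] (besselD g) ξ :=
          ih (besselD f) (besselD g) (sm_besselD hf) (sm_besselD hg) c hξ

lemma deriv2_lin {f g : ℝ → ℝ} (hf : Sm f) (hg : Sm g) (c : ℝ) {ξ} (hξ : ξ ∈ Ioi (0:ℝ)) :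
    deriv (deriv (fun t => c * f t + g t)) ξ
      = c * deriv (deriv f) ξ + deriv (deriv g) ξ := by
  have h1 : EqOn (deriv (fun t => c * f t + g t))
      (fun t => c * deriv f t + deriv g t) (Ioi 0) := by
    intro x hx
    rw [deriv_fun_add ((diffAt hf hx).const_mul c) (diffAt hg hx),
      deriv_const_mul c (diffAt hf hx)]
  rw [deriv_congr' h1 hξ,
    deriv_fun_add ((diffAt (sm_deriv hf) hξ).const_mul c) (diffAt (sm_deriv hg) hξ),
    deriv_const_mul c (diffAt (sm_deriv hf) hξ)]

/-- Evans' lemma: `D² δᵏ (r^{2k+1} f) = δ^{k+1} (r^{2k+2} f')` on `(0, ∞)`. -/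
lemma evans (k : ℕ) : ∀ f, Sm f → ∀ ξ ∈ Ioi (0:ℝ),
    deriv (deriv (besselD^[k] (P (2 * k + 1) f))) ξ
      = besselD^[k + 1] (P (2 * k + 2) (deriv f)) ξ := by
  induction k with
  | zero =>
    intro f hf ξ hξ
    have hξ0 : ξ ≠ 0 := ne_of_gt hξ
    have hf' := sm_deriv hf
    have h1 : EqOn (deriv (P 1 f)) (fun s => f s + s * deriv f s) (Ioi 0) := by
      intro s hs
      rw [deriv_P hf 1 hs]
      simp
    have hL : deriv (deriv (besselD^[0] (P (2 * 0 + 1) f))) ξ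
        = 2 * deriv f ξ + ξ * deriv (deriv f) ξ := by
      show deriv (deriv (P 1 f)) ξ = _
      rw [deriv_congr' h1 hξ,
        deriv_fun_add (diffAt hf hξ) (differentiableAt_fun_id.fun_mul (diffAt hf' hξ)),
        deriv_fun_mul differentiableAt_fun_id (diffAt hf' hξ)]
      simp
      ring
    rw [hL]
    show _ = besselD (P 2 (deriv f)) ξ
    unfold besselD
    rw [deriv_P hf' 2 hξ]
    push_cast
    field_simp
  | succ k ih =>
    intro f hf ξ hξ
    have hf' := sm_deriv hf
    have hf'' := sm_deriv hf'
    set X := besselD^[k + 1] (P (2 * k + 2) (deriv f)) ξ with hX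
    set Y := besselD^[k + 1] (P (2 * k + 3) (deriv (deriv f))) ξ with hY
    -- RHS computation
    have hRHS : besselD^[k + 1 + 1] (P (2 * (k + 1) + 2) (deriv f)) ξ
        = ((2 * k : ℝ) + 4) * X + Y := by
      have e1 : 2 * (k + 1) + 2 = (2 * k + 2) + 2 := by ring
      rw [e1, Function.iterate_succ_apply]
      have h2 := besselD_P hf' (2 * k + 2)
      calc besselD^[k + 1] (besselD (P (2 * k + 2 + 2) (deriv f))) ξ
          = besselD^[k + 1] (fun t => ((2 * k : ℝ) + 2 + 2) * P (2 * k + 2) (deriv f) t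
              + P (2 * k + 3) (deriv (deriv f)) t) ξ := by
            refine iter_congr (fun x hx => ?_) (k + 1) hξ
            have := h2 hx
            push_cast at this ⊢
            convert this using 3 <;> push_cast <;> ring
        _ = ((2 * k : ℝ) + 4) * X + Y := by
            have := iter_lin (k + 1) _ _ (sm_P hf' (2 * k + 2)) (sm_P hf'' (2 * k + 3))
              ((2 * k : ℝ) + 2 + 2) hξ
            rw [this]
            push_cast
            ring
    -- LHS computation
    have hA : Sm (besselD^[k] (P (2 * k + 1) f)) := sm_iter (sm_P hf _) k
    have hB : Sm (besselD^[k] (P (2 * k + 2) (deriv f))) := sm_iter (sm_P hf' _) k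
    have hLHS : deriv (deriv (besselD^[k + 1] (P (2 * (k + 1) + 1) f))) ξ
        = ((2 * k : ℝ) + 3) * deriv (deriv (besselD^[k] (P (2 * k + 1) f))) ξ
          + deriv (deriv (besselD^[k] (P (2 * k + 2) (deriv f)))) ξ := by
      have e2 : 2 * (k + 1) + 1 = (2 * k + 1) + 2 := by ring
      have hcg : EqOn (besselD^[k + 1] (P (2 * (k + 1) + 1) f))
          (fun t => ((2 * k : ℝ) + 3) * besselD^[k] (P (2 * k + 1) f) t
            + besselD^[k] (P (2 * k + 2) (deriv f)) t) (Ioi 0) := by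
        rw [e2, Function.iterate_succ_apply]
        intro x hx
        have h3 : EqOn (besselD (P (2 * k + 1 + 2) f))
            (fun t => ((2 * k : ℝ) + 3) * P (2 * k + 1) f t
              + P (2 * k + 2) (deriv f) t) (Ioi 0) := by
          intro y hy
          have := besselD_P hf (2 * k + 1) hy
          push_cast at this ⊢
          convert this using 3 <;> push_cast <;> ring
        calc besselD^[k] (besselD (P (2 * k + 1 + 2) f)) x
            = besselD^[k] (fun t => ((2 * k : ℝ) + 3) * P (2 * k + 1) f t
                + P (2 * k + 2) (deriv f) t) x := iter_congr h3 k hx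
          _ = _ := iter_lin k _ _ (sm_P hf (2 * k + 1)) (sm_P hf' (2 * k + 2))
                ((2 * k : ℝ) + 3) hx
      rw [deriv2_congr hcg hξ]
      exact deriv2_lin hA hB _ hξ
    -- first term via IH
    have hT1 : deriv (deriv (besselD^[k] (P (2 * k + 1) f))) ξ = X := ih f hf ξ hξ
    -- second term via IH applied to g := t * f'
    have hT2 : deriv (deriv (besselD^[k] (P (2 * k + 2) (deriv f)))) ξ = X + Y := by
      set g : ℝ → ℝ := fun t => t * deriv f t with hgdef
      have hg : Sm g := sm_id_mul hf'
      have e3 : P (2 * k + 2) (deriv f) = P (2 * k + 1) g := by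
        funext t
        simp only [P, hgdef]
        ring
      rw [e3, ih g hg ξ hξ]
      have h4 : EqOn (P (2 * k + 2) (deriv g))
          (fun t => (1 : ℝ) * P (2 * k + 2) (deriv f) t
            + P (2 * k + 3) (deriv (deriv f)) t) (Ioi 0) := by
        intro y hy
        have hdg : deriv g y = deriv f y + y * deriv (deriv f) y := by
          rw [hgdef, deriv_fun_mul differentiableAt_fun_id (diffAt hf' hy)]
          simp
        simp only [P, hdg]
        ring
      calc besselD^[k + 1] (P (2 * k + 2) (deriv g)) ξ
          = besselD^[k + 1] (fun t => (1 : ℝ) * P (2 * k + 2) (deriv f) t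
              + P (2 * k + 3) (deriv (deriv f)) t) ξ := iter_congr h4 (k + 1) hξ
        _ = X + Y := by
            rw [iter_lin (k + 1) _ _ (sm_P hf' (2 * k + 2)) (sm_P hf'' (2 * k + 3)) 1 hξ]
            simp [hX, hY]
    rw [hLHS, hT1, hT2, hRHS]
    ring

/-- The key reduction: `r^{2m+1} δ^{m+1} φ = r^{2m} (δ^m φ)'` on `(0, ∞)`. -/
lemma P_shift {φ : ℝ → ℝ} (m : ℕ) :
    EqOn (P (2 * m + 1) (besselD^[m + 1] φ)) (P (2 * m) (deriv (besselD^[m] φ))) (Ioi 0) := by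
  intro t ht
  have ht0 : (t : ℝ) ≠ 0 := ne_of_gt ht
  simp only [P, Function.iterate_succ_apply']
  show t ^ (2 * m + 1) * (deriv (besselD^[m] φ) t / t) = _
  rw [pow_succ]
  field_simp

/-- Main induction: `δ^m (r^{2m} (δ^m φ)') = D^{2m+1} φ` on `(0, ∞)`. -/
lemma main (m : ℕ) : ∀ φ, Sm φ → ∀ ξ ∈ Ioi (0:ℝ),
    besselD^[m] (P (2 * m) (deriv (besselD^[m] φ))) ξ = deriv^[2 * m + 1] φ ξ := by
  induction m with
  | zero => intro φ _ ξ _; simp [P]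
  | succ m ih =>
    intro φ hφ ξ hξ
    have hψ : Sm (besselD^[m + 1] φ) := sm_iter hφ (m + 1)
    have e1 : 2 * (m + 1) = 2 * m + 2 := by ring
    rw [e1]
    have hev := (evans m (besselD^[m + 1] φ) hψ ξ hξ).symm
    rw [hev]
    have hEq : EqOn (besselD^[m] (P (2 * m + 1) (besselD^[m + 1] φ)))
        (deriv^[2 * m + 1] φ) (Ioi 0) := by
      intro x hx
      calc besselD^[m] (P (2 * m + 1) (besselD^[m + 1] φ)) x
          = besselD^[m] (P (2 * m) (deriv (besselD^[m] φ))) x :=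
            iter_congr (P_shift m) m hx
        _ = deriv^[2 * m + 1] φ x := ih φ hφ x hx
    rw [deriv2_congr hEq hξ]
    simp only [Function.iterate_succ_apply']

end BesselAux

theorem stmt1 (m : ℕ) (φ : ℝ → ℝ) (hφ : ContDiffOn ℝ (⊤ : ℕ∞) φ (Set.Ioi 0))
    (ξ : ℝ) (hξ : 0 < ξ) :
    besselD^[m] (fun t => t ^ (2 * m + 1) * besselD^[m + 1] φ t) ξ
      = deriv^[2 * m + 1] φ ξ := by
  have hφ' : BesselAux.Sm φ := hφ.of_le (by simp)
  have hξ' : ξ ∈ Set.Ioi (0:ℝ) := hξ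
  calc besselD^[m] (fun t => t ^ (2 * m + 1) * besselD^[m + 1] φ t) ξ
      = besselD^[m] (BesselAux.P (2 * m) (deriv (besselD^[m] φ))) ξ :=
        BesselAux.iter_congr (BesselAux.P_shift m) m hξ'
    _ = deriv^[2 * m + 1] φ ξ := BesselAux.main m φ hφ' ξ hξ'
end

section
/- For natural numbers α, and integers i, t with max(0, α+3−i) ≤ t ≤ min(2α+4−i, α+2), the sum over s from max(1, i−α−2) to min(α+2, i) of C(α+2, s)·C(α+2, i−s)·C(α+2−i+s, t) over admissible s equals C(α+2, t)·C(2α+4−t, i), where C(n,k) denotes the binomial coefficient. -/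
/-!
With `n = α + 2`, the factor `C(n, i - s) * C(n - (i - s), t)` counts the same choices as
`C(n, t) * C(n - t, i - s)`, so the sum becomes `C(n, t) * ∑ C(n, s) * C(n - t, i - s)`, which is
`C(n, t) * C(2n - t, i)` by Vandermonde's identity. The lower bound on `t` kills the `s = 0` term.
-/

open Finset

namespace Nat

/-- Both sides equal `C(n, k + t) * C(k + t, k)`. -/
theorem choose_mul_choose_sub_comm (n k t : ℕ) :
    n.choose k * (n - k).choose t = n.choose t * (n - t).choose k := by
  have hk := choose_mul (n := n) (Nat.le_add_right k t)
  have ht := choose_mul (n := n) (Nat.le_add_left t k)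
  rw [Nat.add_sub_cancel_left] at hk
  rw [Nat.add_sub_cancel] at ht
  rw [← hk, ← ht, choose_symm_add]

theorem sum_range_choose_mul_choose_mul_choose (n i t : ℕ) :
    ∑ s ∈ range (i + 1), n.choose s * n.choose (i - s) * (n + s - i).choose t
      = n.choose t * (2 * n - t).choose i := by
  rcases le_or_gt t n with htn | hnt
  · have hterm : ∀ s ∈ range (i + 1), n.choose s * n.choose (i - s) * (n + s - i).choose t
        = n.choose t * (n.choose s * (n - t).choose (i - s)) := by
      intro s hs
      have hsi : s ≤ i := Nat.lt_succ_iff.mp (mem_range.mp hs)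
      rcases le_or_gt (i - s) n with h | h
      · rw [show n + s - i = n - (i - s) by omega, mul_assoc, choose_mul_choose_sub_comm]
        ring
      · rw [choose_eq_zero_of_lt h, choose_eq_zero_of_lt (by omega : n - t < i - s)]
        simp
    rw [sum_congr rfl hterm, ← mul_sum, show 2 * n - t = n + (n - t) by omega, add_choose_eq,
      Nat.sum_antidiagonal_eq_sum_range_succ_mk]
  · rw [choose_eq_zero_of_lt hnt, zero_mul]
    refine sum_eq_zero fun s hs => ?_
    have hsi : s < i + 1 := mem_range.mp hs
    rw [choose_eq_zero_of_lt (by omega : n + s - i < t), mul_zero]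

end Nat

theorem stmt2_general (α i t : ℕ) (ht1 : α + 3 - i ≤ t) :
    ∑ s ∈ Finset.Icc (max 1 (i - (α + 2))) (min (α + 2) i),
        Nat.choose (α + 2) s * Nat.choose (α + 2) (i - s) *
          Nat.choose (α + 2 + s - i) t
      = Nat.choose (α + 2) t * Nat.choose (2 * α + 4 - t) i := by
  set n := α + 2
  have hvanish : ∀ s ∈ range (i + 1), s ∉ Icc (max 1 (i - n)) (min n i) →
      n.choose s * n.choose (i - s) * (n + s - i).choose t = 0 := by
    intro s hs hs'
    simp only [mem_Icc, mem_range] at hs hs'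
    rcases (by omega : n < s ∨ n < i - s ∨ s = 0) with h | h | rfl
    · rw [Nat.choose_eq_zero_of_lt h, zero_mul, zero_mul]
    · rw [Nat.choose_eq_zero_of_lt h, mul_zero, zero_mul]
    · rcases le_or_gt i n with hin | hni
      · rw [Nat.choose_eq_zero_of_lt (by omega : n + 0 - i < t), mul_zero]
      · rw [Nat.choose_eq_zero_of_lt (by omega : n < i - 0), mul_zero, zero_mul]
  rw [sum_subset (fun s hs => by simp only [mem_Icc, mem_range] at hs ⊢; omega) hvanish,
    Nat.sum_range_choose_mul_choose_mul_choose, show 2 * α + 4 = 2 * n by omega]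

theorem stmt2 (α i t : ℕ) (hi1 : 1 ≤ i) (hi2 : i ≤ 2 * α + 4)
    (ht1 : α + 3 - i ≤ t) (ht2 : t ≤ min (2 * α + 4 - i) (α + 2)) :
    ∑ s ∈ Finset.Icc (max 1 (i - (α + 2))) (min (α + 2) i),
        Nat.choose (α + 2) s * Nat.choose (α + 2) (i - s) *
          Nat.choose (α + 2 + s - i) t
      = Nat.choose (α + 2) t * Nat.choose (2 * α + 4 - t) i :=
  stmt2_general α i t ht1
end

section
/- For a smooth function y and all real x ≠ 1, the second-order expression {(x²−1)·y'' + [α−β+(α+β+2)x]·y' − (2(α+1)/(x−1))·y + j(α+β+1−j)·y} applied to the function (x−1)·u(x) equals (x−1) times {(x²−1)·u'' + [α−β+2+(α+β+4)x]·u' + (j+1)(α+β+2−j)·u}, for any real parameters α, β and any real j. -/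
theorem stmt3 (α β j : ℝ) (u : ℝ → ℝ) (hu : ContDiff ℝ 2 u)
    (x : ℝ) (hx : x ≠ 1) :
    (x ^ 2 - 1) * deriv (deriv (fun t => (t - 1) * u t)) x
      + (α - β + (α + β + 2) * x) * deriv (fun t => (t - 1) * u t) x
      - (2 * (α + 1) / (x - 1)) * ((x - 1) * u x)
      + j * (α + β + 1 - j) * ((x - 1) * u x)
      = (x - 1) * ((x ^ 2 - 1) * deriv (deriv u) x
          + (α - β + 2 + (α + β + 4) * x) * deriv u x
          + (j + 1) * (α + β + 2 - j) * u x) := by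
  have hud : Differentiable ℝ u := hu.differentiable (by norm_num)
  have hud' : Differentiable ℝ (deriv u) := by
    have : ContDiff ℝ 1 (deriv u) := (contDiff_succ_iff_deriv.mp (show ContDiff ℝ (1+1) u from by norm_num [hu])).2.2
    exact this.differentiable (by norm_num)
  have h1 : deriv (fun t => (t - 1) * u t) = fun t => u t + (t - 1) * deriv u t := by
    funext t
    have : HasDerivAt (fun t => (t - 1) * u t) ((1 : ℝ) * u t + (t - 1) * deriv u t) t :=
      ((hasDerivAt_id t).sub_const 1).mul (hud t).hasDerivAt
    simpa using this.deriv
  rw [h1]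
  have h2 : deriv (fun t => u t + (t - 1) * deriv u t) x
      = deriv u x + (deriv u x + (x - 1) * deriv (deriv u) x) := by
    have : HasDerivAt (fun t => u t + (t - 1) * deriv u t)
        (deriv u x + ((1 : ℝ) * deriv u x + (x - 1) * deriv (deriv u) x)) x :=
      (hud x).hasDerivAt.add (((hasDerivAt_id x).sub_const 1).mul (hud' x).hasDerivAt)
    simpa using this.deriv
  rw [h2]
  have hx' : x - 1 ≠ 0 := sub_ne_zero.mpr hx
  field_simp
  ring
end

section
/- Define u_j^β(x) = (x+1)^{j+β} · D^j[(x−1)^j · u(x)] for a smooth function u and real β. Then for every j ∈ ℕ, D^{j+1} u_{j+1}^β(x) = {(x²−1)D² + [2j+β+1+(2j−β+3)x]·D + (j+1)(j−β+1)} applied to D^j u_j^β(x), for all x > −1. -/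
/-- `U β u j x = (x+1)^(j+β) · Dʲ[(x−1)ʲ u(x)]`. -/
noncomputable def U (β : ℝ) (u : ℝ → ℝ) (j : ℕ) : ℝ → ℝ :=
  fun x => (x + 1) ^ ((j : ℝ) + β) * deriv^[j] (fun s => (s - 1) ^ j * u s) x

section Aux

open Set

variable {s : Set ℝ}

lemma eqOn_iterate_deriv (hs : IsOpen s) {f g : ℝ → ℝ} (h : Set.EqOn f g s) (n : ℕ) :
    Set.EqOn (deriv^[n] f) (deriv^[n] g) s := by
  induction n with
  | zero => exact h
  | succ n ih =>
    intro x hx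
    rw [Function.iterate_succ_apply', Function.iterate_succ_apply']
    exact Filter.EventuallyEq.deriv_eq (ih.eventuallyEq_of_mem (hs.mem_nhds hx))

lemma contDiffOn_iterate_deriv (hs : IsOpen s) {f : ℝ → ℝ}
    (hf : ContDiffOn ℝ (⊤ : ℕ∞) f s) (n : ℕ) : ContDiffOn ℝ (⊤ : ℕ∞) (deriv^[n] f) s := by
  induction n with
  | zero => exact hf
  | succ n ih =>
    rw [Function.iterate_succ_apply']
    exact ih.deriv_of_isOpen hs (by simp)

lemma diffAt_iterate_deriv (hs : IsOpen s) {f : ℝ → ℝ}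
    (hf : ContDiffOn ℝ (⊤ : ℕ∞) f s) (n : ℕ) {x : ℝ} (hx : x ∈ s) :
    DifferentiableAt ℝ (deriv^[n] f) x :=
  ((contDiffOn_iterate_deriv hs hf n).differentiableOn (by simp)).differentiableAt
    (hs.mem_nhds hx)

lemma hasDerivAt_iterate_deriv (hs : IsOpen s) {f : ℝ → ℝ}
    (hf : ContDiffOn ℝ (⊤ : ℕ∞) f s) (n : ℕ) {x : ℝ} (hx : x ∈ s) :
    HasDerivAt (deriv^[n] f) (deriv^[n+1] f x) x := by
  rw [Function.iterate_succ_apply']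
  exact (diffAt_iterate_deriv hs hf n hx).hasDerivAt

lemma iterate_deriv_add (hs : IsOpen s) (n : ℕ) :
    ∀ {f g : ℝ → ℝ}, ContDiffOn ℝ (⊤ : ℕ∞) f s → ContDiffOn ℝ (⊤ : ℕ∞) g s →
      ∀ x ∈ s, deriv^[n] (fun t => f t + g t) x = deriv^[n] f x + deriv^[n] g x := by
  induction n with
  | zero => intro f g _ _ x _; rfl
  | succ n ih =>
    intro f g hf hg x hx
    rw [Function.iterate_succ_apply, Function.iterate_succ_apply,
      Function.iterate_succ_apply]
    have h1 : Set.EqOn (deriv (fun t => f t + g t)) (fun t => deriv f t + deriv g t) s := by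
      intro y hy
      exact deriv_fun_add ((hf.differentiableOn (by simp)).differentiableAt (hs.mem_nhds hy))
        ((hg.differentiableOn (by simp)).differentiableAt (hs.mem_nhds hy))
    rw [eqOn_iterate_deriv hs h1 n hx]
    exact ih (hf.deriv_of_isOpen hs (by simp)) (hg.deriv_of_isOpen hs (by simp)) x hx

/-- Leibniz for a linear factor: `D^{n+1}[(t-1)·f] = (x-1)·D^{n+1}f + (n+1)·D^n f` on `s`. -/
lemma iterate_deriv_linear (hs : IsOpen s) (n : ℕ) :
    ∀ {f : ℝ → ℝ}, ContDiffOn ℝ (⊤ : ℕ∞) f s →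
      ∀ x ∈ s, deriv^[n+1] (fun t => (t - 1) * f t) x
        = (x - 1) * deriv^[n+1] f x + ((n : ℝ) + 1) * deriv^[n] f x := by
  induction n with
  | zero =>
    intro f hf x hx
    have hfx : DifferentiableAt ℝ f x :=
      (hf.differentiableOn (by simp)).differentiableAt (hs.mem_nhds hx)
    have h : HasDerivAt (fun t => (t - 1) * f t) (1 * f x + (x - 1) * deriv f x) x :=
      ((hasDerivAt_id' (x := x)).sub_const 1).mul hfx.hasDerivAt
    simp only [zero_add, Function.iterate_one, Function.iterate_zero, id_eq, Nat.cast_zero]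
    rw [h.deriv]; ring
  | succ n ih =>
    intro f hf x hx
    have hlin : ContDiffOn ℝ (⊤ : ℕ∞) (fun t : ℝ => t - 1) s :=
      (contDiff_id.sub contDiff_const).contDiffOn
    have h1 : Set.EqOn (deriv (fun t => (t - 1) * f t))
        (fun t => (t - 1) * deriv f t + f t) s := by
      intro y hy
      have hfy : DifferentiableAt ℝ f y :=
        (hf.differentiableOn (by simp)).differentiableAt (hs.mem_nhds hy)
      have h : HasDerivAt (fun t => (t - 1) * f t) (1 * f y + (y - 1) * deriv f y) y :=
        ((hasDerivAt_id' (x := y)).sub_const 1).mul hfy.hasDerivAt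
      rw [h.deriv]; ring
    have hdf : ContDiffOn ℝ (⊤ : ℕ∞) (deriv f) s := hf.deriv_of_isOpen hs (by simp)
    rw [show n + 1 + 1 = (n + 1) + 1 from rfl, Function.iterate_succ_apply,
      eqOn_iterate_deriv hs h1 (n+1) hx,
      iterate_deriv_add hs (n+1) (hlin.mul hdf) hf x hx,
      ih hdf x hx, ← Function.iterate_succ_apply deriv,
      ← Function.iterate_succ_apply deriv]
    push_cast
    ring

end Aux

open Set

/-- The first-order recurrence for `U`. -/
lemma U_succ_eq (β : ℝ) (u : ℝ → ℝ) (hu : ContDiffOn ℝ (⊤ : ℕ∞) u (Set.Ioi (-1))) (j : ℕ) :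
    ∀ x ∈ Set.Ioi (-1 : ℝ),
      U β u (j+1) x = (x ^ 2 - 1) * deriv (U β u j) x
        + ((1 - β) * x + (2 * (j : ℝ) + 1 + β)) * U β u j x := by
  intro x hx
  have hs : IsOpen (Set.Ioi (-1 : ℝ)) := isOpen_Ioi
  have hx1 : (0 : ℝ) < x + 1 := by
    simpa using neg_lt_iff_pos_add.mp hx
  set f : ℝ → ℝ := fun s => (s - 1) ^ j * u s with hf_def
  have hf : ContDiffOn ℝ (⊤ : ℕ∞) f (Set.Ioi (-1)) :=
    (((contDiff_id.sub contDiff_const).pow j).contDiffOn).mul hu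
  -- derivative of U β u j at x
  have hrp : HasDerivAt (fun t : ℝ => (t + 1) ^ ((j : ℝ) + β))
      ((((j : ℝ) + β) * (x + 1) ^ ((j : ℝ) + β - 1)) * 1) x := by
    have h1 : HasDerivAt (fun y : ℝ => y ^ ((j : ℝ) + β))
        (((j : ℝ) + β) * (x + 1) ^ ((j : ℝ) + β - 1)) (x + 1) :=
      Real.hasDerivAt_rpow_const (Or.inl (ne_of_gt hx1))
    exact h1.comp x ((hasDerivAt_id x).add_const 1)
  have hV : HasDerivAt (deriv^[j] f) (deriv^[j+1] f x) x :=
    hasDerivAt_iterate_deriv hs hf j hx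
  have hderivU : deriv (U β u j) x
      = (((j : ℝ) + β) * (x + 1) ^ ((j : ℝ) + β - 1)) * deriv^[j] f x
        + (x + 1) ^ ((j : ℝ) + β) * deriv^[j+1] f x := by
    have := (hrp.fun_mul hV).deriv
    rw [show U β u j = fun t => (t + 1) ^ ((j : ℝ) + β) * deriv^[j] f t from rfl]
    simpa [U, mul_comm, mul_assoc, mul_left_comm] using this
  -- express U (j+1)
  have hfun : (fun s : ℝ => (s - 1) ^ (j+1) * u s) = fun t => (t - 1) * f t := by
    funext t; simp [hf_def, pow_succ]; ring
  have hA : deriv^[j+1] (fun s : ℝ => (s - 1) ^ (j+1) * u s) x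
      = (x - 1) * deriv^[j+1] f x + ((j : ℝ) + 1) * deriv^[j] f x := by
    rw [hfun]; exact iterate_deriv_linear hs j hf x hx
  have hne : x + 1 ≠ 0 := ne_of_gt hx1
  have e1 : (x + 1) ^ ((j : ℝ) + β) = (x + 1) ^ ((j : ℝ) + β - 1) * (x + 1) := by
    have h1 := Real.rpow_add_one hne ((j : ℝ) + β - 1)
    rw [show (j : ℝ) + β - 1 + 1 = (j : ℝ) + β by ring] at h1
    exact h1
  show (x + 1) ^ ((((j+1) : ℕ) : ℝ) + β) * deriv^[j+1] (fun s => (s - 1) ^ (j+1) * u s) x = _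
  have e3 : (x + 1) ^ ((((j+1) : ℕ) : ℝ) + β)
      = (x + 1) ^ ((j : ℝ) + β - 1) * (x + 1) * (x + 1) := by
    have h2 := Real.rpow_add_one hne ((j : ℝ) + β)
    rw [show (((j+1) : ℕ) : ℝ) + β = ((j : ℝ) + β) + 1 by push_cast; ring, h2, e1]
  rw [hA, hderivU, e3, U, e1]
  ring

/-- Iterated-derivative form of the recurrence. -/
lemma iterate_U_succ (β : ℝ) (u : ℝ → ℝ) (hu : ContDiffOn ℝ (⊤ : ℕ∞) u (Set.Ioi (-1))) (j : ℕ) :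
    ∀ n : ℕ, ∀ x ∈ Set.Ioi (-1 : ℝ),
      deriv^[n+1] (U β u (j+1)) x
        = (x ^ 2 - 1) * deriv^[n+2] (U β u j) x
          + ((2 * (n : ℝ) + 3 - β) * x + (2 * (j : ℝ) + 1 + β)) * deriv^[n+1] (U β u j) x
          + ((n : ℝ) + 1) * ((n : ℝ) + 1 - β) * deriv^[n] (U β u j) x := by
  have hs : IsOpen (Set.Ioi (-1 : ℝ)) := isOpen_Ioi
  have hf : ContDiffOn ℝ (⊤ : ℕ∞) (fun s : ℝ => (s - 1) ^ j * u s) (Set.Ioi (-1)) :=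
    (((contDiff_id.sub contDiff_const).pow j).contDiffOn).mul hu
  have hUj : ContDiffOn ℝ (⊤ : ℕ∞) (U β u j) (Set.Ioi (-1)) := by
    have hr : ContDiffOn ℝ (⊤ : ℕ∞) (fun x : ℝ => (x + 1) ^ ((j : ℝ) + β)) (Set.Ioi (-1)) := by
      intro x hx
      have hx1 : (0 : ℝ) < x + 1 := by simpa using neg_lt_iff_pos_add.mp hx
      exact ((Real.contDiffAt_rpow_const_of_ne (ne_of_gt hx1)).comp x
        ((contDiff_id.add contDiff_const).contDiffAt)).contDiffWithinAt
    exact hr.mul (contDiffOn_iterate_deriv hs hf j)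
  intro n
  induction n with
  | zero =>
    intro x hx
    have hEq : Set.EqOn (U β u (j+1))
        (fun t => (t ^ 2 - 1) * deriv (U β u j) t
          + ((1 - β) * t + (2 * (j : ℝ) + 1 + β)) * U β u j t) (Set.Ioi (-1)) :=
      fun t ht => U_succ_eq β u hu j t ht
    have hL : deriv^[1] (U β u (j+1)) x = deriv (fun t => (t ^ 2 - 1) * deriv (U β u j) t
          + ((1 - β) * t + (2 * (j : ℝ) + 1 + β)) * U β u j t) x :=
      Filter.EventuallyEq.deriv_eq (hEq.eventuallyEq_of_mem (hs.mem_nhds hx))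
    have h1 : HasDerivAt (deriv (U β u j)) (deriv^[2] (U β u j) x) x := by
      have := hasDerivAt_iterate_deriv hs hUj 1 hx
      simpa using this
    have h0 : HasDerivAt (U β u j) (deriv (U β u j) x) x := by
      have := hasDerivAt_iterate_deriv hs hUj 0 hx
      simpa using this
    have hq : HasDerivAt (fun t : ℝ => t ^ 2 - 1) (2 * x) x := by
      simpa using ((hasDerivAt_pow 2 x).sub_const 1)
    have hl : HasDerivAt (fun t : ℝ => (1 - β) * t + (2 * (j : ℝ) + 1 + β)) (1 - β) x := by
      simpa using (((hasDerivAt_id x).const_mul (1 - β)).add_const (2 * (j : ℝ) + 1 + β))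
    have hR := ((hq.fun_mul h1).fun_add (hl.fun_mul h0)).deriv
    rw [hL, hR]
    have e1 : deriv^[0+1] (U β u j) x = deriv (U β u j) x := rfl
    have e2 : deriv^[0] (U β u j) x = U β u j x := rfl
    rw [show (0:ℕ)+2 = 2 from rfl, e1, e2]
    push_cast
    ring
  | succ n ih =>
    intro x hx
    have hEq : Set.EqOn (deriv^[n+1] (U β u (j+1)))
        (fun t => (t ^ 2 - 1) * deriv^[n+2] (U β u j) t
          + ((2 * (n : ℝ) + 3 - β) * t + (2 * (j : ℝ) + 1 + β)) * deriv^[n+1] (U β u j) t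
          + ((n : ℝ) + 1) * ((n : ℝ) + 1 - β) * deriv^[n] (U β u j) t) (Set.Ioi (-1)) :=
      fun t ht => ih t ht
    have hL : deriv^[n+1+1] (U β u (j+1)) x
        = deriv (fun t => (t ^ 2 - 1) * deriv^[n+2] (U β u j) t
          + ((2 * (n : ℝ) + 3 - β) * t + (2 * (j : ℝ) + 1 + β)) * deriv^[n+1] (U β u j) t
          + ((n : ℝ) + 1) * ((n : ℝ) + 1 - β) * deriv^[n] (U β u j) t) x := by
      rw [Function.iterate_succ_apply' deriv (n+1)]
      exact Filter.EventuallyEq.deriv_eq (hEq.eventuallyEq_of_mem (hs.mem_nhds hx))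
    have hA : HasDerivAt (deriv^[n+2] (U β u j)) (deriv^[n+3] (U β u j) x) x :=
      hasDerivAt_iterate_deriv hs hUj (n+2) hx
    have hB : HasDerivAt (deriv^[n+1] (U β u j)) (deriv^[n+2] (U β u j) x) x :=
      hasDerivAt_iterate_deriv hs hUj (n+1) hx
    have hC : HasDerivAt (deriv^[n] (U β u j)) (deriv^[n+1] (U β u j) x) x :=
      hasDerivAt_iterate_deriv hs hUj n hx
    have hq : HasDerivAt (fun t : ℝ => t ^ 2 - 1) (2 * x) x := by
      simpa using ((hasDerivAt_pow 2 x).sub_const 1)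
    have hl : HasDerivAt (fun t : ℝ => (2 * (n : ℝ) + 3 - β) * t + (2 * (j : ℝ) + 1 + β))
        (2 * (n : ℝ) + 3 - β) x := by
      simpa using (((hasDerivAt_id x).const_mul (2 * (n : ℝ) + 3 - β)).add_const
        (2 * (j : ℝ) + 1 + β))
    have hR := (((hq.fun_mul hA).fun_add (hl.fun_mul hB)).fun_add (hC.const_mul
      (((n : ℝ) + 1) * ((n : ℝ) + 1 - β)))).deriv
    rw [hL, hR]
    push_cast
    ring

theorem stmt4 (β : ℝ) (hβ : -1 < β) (u : ℝ → ℝ)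
    (hu : ContDiffOn ℝ (⊤ : ℕ∞) u (Set.Ioi (-1))) (j : ℕ) (x : ℝ) (hx : -1 < x) :
    deriv^[j + 1] (U β u (j + 1)) x
      = (x ^ 2 - 1) * deriv^[j + 2] (U β u j) x
        + (2 * (j : ℝ) + β + 1 + (2 * (j : ℝ) - β + 3) * x) *
            deriv^[j + 1] (U β u j) x
        + ((j : ℝ) + 1) * ((j : ℝ) - β + 1) * deriv^[j] (U β u j) x := by
  rw [iterate_U_succ β u hu j j x hx]
  ring
end

section
/- For α ∈ ℕ, β > −1, n ≥ 1, and R_n^{α,β}(x) = A_n^{α,β}·(x−1)·P_{n−1}^{α+2,β}(x) with A_n^{α,β} = (α+2)_{n−1}(α+β+2)_n / (2·n!·(β+1)_{n−1}), the Jacobi-type operator satisfies (x−1)(x+1)^{−β} D^{α+2}[(x+1)^{α+β+2} D^{α+2}((x−1)^{α+1} R_n^{α,β}(x))] = (n)_{α+2}·(n+β)_{α+2}·R_n^{α,β}(x) for all x ∈ (−1,1). -/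
/-- Pochhammer symbol (rising factorial) for a real argument. -/
noncomputable def poch (a : ℝ) (k : ℕ) : ℝ := ∏ i ∈ Finset.range k, (a + i)

/-- Jacobi polynomial of degree `n` with real parameters `γ, δ`, via its
terminating hypergeometric series. -/
noncomputable def jacobiP (n : ℕ) (γ δ : ℝ) (x : ℝ) : ℝ :=
  (poch (γ + 1) n / Nat.factorial n) *
    ∑ k ∈ Finset.range (n + 1),
      (poch (-(n : ℝ)) k * poch ((n : ℝ) + γ + δ + 1) k /
        (poch (γ + 1) k * Nat.factorial k)) * ((1 - x) / 2) ^ k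


/-!
In the variable `y = x - 1` the Jacobi polynomial is an explicit polynomial whose coefficients
satisfy two contiguity relations. They give the Rodrigues-type rules
`D[(x-1)^(g+1) P_m^(g+1,δ)] = (m+g+1) (x-1)^g P_m^(g,δ+1)` and
`D[(x+1)^δ P_m^(γ,δ)] = (m+δ) (x+1)^(δ-1) P_m^(γ+1,δ-1)`.
Since `(x-1)^(α+1) R_n = A (x-1)^(α+2) P_(n-1)^(α+2,β)`, the first rule applied `α+2` times
yields `A (n)_(α+2) P_(n-1)^(0,α+β+2)`; after multiplying by `(x+1)^(α+β+2)`, the second rule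
applied `α+2` times yields `A (n)_(α+2) (n+β)_(α+2) (x+1)^β P_(n-1)^(α+2,β)`.
-/

open Finset Polynomial
open scoped Nat

lemma poch_succ (a : ℝ) (k : ℕ) : poch a (k + 1) = poch a k * (a + k) :=
  prod_range_succ _ _

lemma poch_succ' (a : ℝ) (k : ℕ) : poch a (k + 1) = a * poch (a + 1) k := by
  rw [poch, poch, prod_range_succ', mul_comm]
  push_cast
  rw [add_zero]
  exact congrArg (a * ·) (prod_congr rfl fun i _ => by ring)

lemma poch_pos {a : ℝ} (ha : 0 < a) (k : ℕ) : 0 < poch a k :=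
  prod_pos fun _ _ => by positivity

lemma poch_neg_natCast_of_lt {m k : ℕ} (h : m < k) : poch (-(m : ℝ)) k = 0 :=
  prod_eq_zero (mem_range.mpr h) (by ring)

lemma add_mul_poch_div_poch {a : ℝ} (ha : 0 < a) (m k : ℕ) :
    (a + k) * (poch (a + 1) m / poch (a + 1) k) = (m + a) * (poch a m / poch a k) := by
  have hk := (poch_pos ha k).ne'
  have hk1 := (poch_pos (by linarith : 0 < a + 1) k).ne'
  have ek : poch a k * (a + k) = a * poch (a + 1) k := by rw [← poch_succ, poch_succ']
  have em : poch a m * (a + m) = a * poch (a + 1) m := by rw [← poch_succ, poch_succ']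
  field_simp
  linear_combination poch (a + 1) m * ek - poch (a + 1) k * em

lemma prod_range_add_sub_eq_poch (a : ℝ) (N : ℕ) :
    ∏ i ∈ range N, (a + N - i) = poch (a + 1) N := by
  rw [poch, ← prod_range_reflect]
  refine prod_congr rfl fun i hi => ?_
  rw [Nat.sub_sub, Nat.cast_sub (by simp at hi; omega)]
  push_cast
  ring

/-- The coefficient of `(x - 1) ^ k` in `jacobiP m γ δ x`. Only the first factor depends on `γ`
and `δ` separately, the second only on `γ + δ`, which the contiguity relations preserve. -/
noncomputable def jacobiCoeff (m : ℕ) (γ δ : ℝ) (k : ℕ) : ℝ :=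
  poch (γ + 1) m / poch (γ + 1) k *
    (poch (-(m : ℝ)) k * poch (m + γ + δ + 1) k / (m ! * k !) * (-1 / 2) ^ k)

lemma jacobiCoeff_eq_zero_of_lt {m k : ℕ} (h : m < k) (γ δ : ℝ) : jacobiCoeff m γ δ k = 0 := by
  simp [jacobiCoeff, poch_neg_natCast_of_lt h]

lemma jacobiCoeff_succ {γ : ℝ} (hγ : -1 < γ) (m : ℕ) (δ : ℝ) (k : ℕ) :
    jacobiCoeff m γ δ (k + 1) * ((γ + 1 + k) * (k + 1)) =
      jacobiCoeff m γ δ k * ((k - m) * (m + γ + δ + 1 + k) * (-1 / 2)) := by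
  have hk := (poch_pos (by linarith : 0 < γ + 1) k).ne'
  have hγk : γ + 1 + k ≠ 0 := by have := k.cast_nonneg (α := ℝ); linarith
  simp only [jacobiCoeff, poch_succ, Nat.factorial_succ, pow_succ]
  push_cast
  field_simp
  ring

lemma jacobiCoeff_lower {γ : ℝ} (hγ : -1 < γ) (m : ℕ) (δ : ℝ) (k : ℕ) :
    (γ + 1 + k) * jacobiCoeff m (γ + 1) δ k = (m + γ + 1) * jacobiCoeff m γ (δ + 1) k := by
  have key := add_mul_poch_div_poch (by linarith : 0 < γ + 1) m k
  simp only [jacobiCoeff, show (m : ℝ) + (γ + 1) + δ + 1 = m + γ + (δ + 1) + 1 by ring]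
  linear_combination (poch (-(m : ℝ)) k * poch (m + γ + (δ + 1) + 1) k / (m ! * k !) *
    (-1 / 2) ^ k) * key

lemma jacobiCoeff_raise {γ : ℝ} (hγ : -1 < γ) (m : ℕ) (δ : ℝ) (k : ℕ) :
    (δ + k) * jacobiCoeff m γ δ k + 2 * (k + 1) * jacobiCoeff m γ δ (k + 1) =
      (m + δ) * jacobiCoeff m (γ + 1) (δ - 1) k := by
  have hγk : γ + 1 + k ≠ 0 := by have := k.cast_nonneg (α := ℝ); linarith
  have hlower := jacobiCoeff_lower hγ m (δ - 1) k
  rw [sub_add_cancel] at hlower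
  have hsucc := jacobiCoeff_succ hγ m δ k
  apply mul_left_cancel₀ hγk
  linear_combination 2 * hsucc - (m + δ) * hlower

noncomputable def jacobiShifted (m : ℕ) (γ δ : ℝ) : ℝ[X] :=
  ∑ k ∈ range (m + 1), C (jacobiCoeff m γ δ k) * X ^ k

lemma coeff_jacobiShifted (m : ℕ) (γ δ : ℝ) (k : ℕ) :
    (jacobiShifted m γ δ).coeff k = jacobiCoeff m γ δ k := by
  simp only [jacobiShifted, finsetSum_coeff, coeff_C_mul_X_pow, sum_ite_eq, mem_range]
  split_ifs with h
  · rfl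
  · exact (jacobiCoeff_eq_zero_of_lt (by omega) γ δ).symm

lemma jacobiP_eq_eval (m : ℕ) (γ δ x : ℝ) :
    jacobiP m γ δ x = (jacobiShifted m γ δ).eval (x - 1) := by
  simp only [jacobiP, jacobiShifted, eval_finsetSum, eval_mul, eval_C, eval_pow, eval_X,
    mul_sum, jacobiCoeff]
  refine sum_congr rfl fun k _ => ?_
  rw [show (1 - x) / 2 = -1 / 2 * (x - 1) by ring, mul_pow]
  ring

lemma coeff_X_mul_derivative {R : Type*} [Semiring R] (p : R[X]) (k : ℕ) :
    (X * derivative p).coeff k = p.coeff k * k := by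
  cases k with
  | zero => simp
  | succ j => rw [coeff_X_mul, coeff_derivative]; push_cast; rfl

lemma jacobiShifted_lower {γ : ℝ} (hγ : -1 < γ) (m : ℕ) (δ : ℝ) :
    C (γ + 1) * jacobiShifted m (γ + 1) δ + X * derivative (jacobiShifted m (γ + 1) δ) =
      C (m + γ + 1) * jacobiShifted m γ (δ + 1) := by
  ext k
  simp only [coeff_add, coeff_C_mul, coeff_X_mul_derivative, coeff_jacobiShifted]
  linear_combination jacobiCoeff_lower hγ m δ k

lemma jacobiShifted_raise {γ : ℝ} (hγ : -1 < γ) (m : ℕ) (δ : ℝ) :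
    C δ * jacobiShifted m γ δ + (X + C 2) * derivative (jacobiShifted m γ δ) =
      C (m + δ) * jacobiShifted m (γ + 1) (δ - 1) := by
  ext k
  simp only [add_mul, coeff_add, coeff_C_mul, coeff_X_mul_derivative, coeff_derivative,
    coeff_jacobiShifted]
  linear_combination jacobiCoeff_raise hγ m δ k

lemma hasDerivAt_jacobiP (m : ℕ) (γ δ x : ℝ) :
    HasDerivAt (jacobiP m γ δ) ((derivative (jacobiShifted m γ δ)).eval (x - 1)) x := by
  rw [show jacobiP m γ δ = fun t => (jacobiShifted m γ δ).eval (t - 1) from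
    funext (jacobiP_eq_eval m γ δ)]
  exact ((jacobiShifted m γ δ).hasDerivAt (x - 1)).comp_sub_const x 1

lemma deriv_sub_one_pow_mul_jacobiP (m g : ℕ) (δ x : ℝ) :
    deriv (fun t => (t - 1) ^ (g + 1) * jacobiP m (g + 1) δ t) x =
      (m + g + 1) * ((x - 1) ^ g * jacobiP m g (δ + 1) x) := by
  have h := congrArg (eval (x - 1)) (jacobiShifted_lower (γ := g) (by linarith [g.cast_nonneg (α := ℝ)]) m δ)
  simp only [eval_add, eval_mul, eval_C, eval_X] at h
  rw [((hasDerivAt_id' x).sub_const 1 |>.fun_pow (g + 1) |>.fun_mul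
    (hasDerivAt_jacobiP m _ δ x)).deriv, jacobiP_eq_eval, jacobiP_eq_eval, Nat.add_sub_cancel]
  push_cast
  linear_combination (x - 1) ^ g * h

lemma deriv_add_one_rpow_mul_jacobiP {γ : ℝ} (hγ : -1 < γ) (m : ℕ) (δ : ℝ) {x : ℝ}
    (hx : -1 < x) :
    deriv (fun t => (t + 1) ^ δ * jacobiP m γ δ t) x =
      (m + δ) * ((x + 1) ^ (δ - 1) * jacobiP m (γ + 1) (δ - 1) x) := by
  have hx1 : x + 1 ≠ 0 := by linarith
  have h := congrArg (eval (x - 1)) (jacobiShifted_raise hγ m δ)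
  simp only [eval_add, eval_mul, eval_C, eval_X] at h
  rw [((hasDerivAt_id' x).add_const 1 |>.rpow_const (Or.inl hx1) |>.fun_mul
    (hasDerivAt_jacobiP m γ δ x)).deriv, jacobiP_eq_eval, jacobiP_eq_eval]
  rw [show (x + 1) ^ δ = (x + 1) ^ (δ - 1) * (x + 1) by
    rw [← Real.rpow_add_one hx1, sub_add_cancel]]
  linear_combination (x + 1) ^ (δ - 1) * h

theorem iteratedDeriv_eq_prod_mul_of_deriv_eq {𝕜 : Type*} [NontriviallyNormedField 𝕜]
    {s : Set 𝕜} (hs : IsOpen s) {f : ℕ → 𝕜 → 𝕜} {a : ℕ → 𝕜} {N : ℕ}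
    (h : ∀ k < N, ∀ x ∈ s, deriv (f k) x = a k * f (k + 1) x) :
    ∀ x ∈ s, iteratedDeriv N (f 0) x = (∏ i ∈ range N, a i) * f N x := by
  induction N with
  | zero => simp
  | succ N ih =>
    intro x hx
    have ih' := Filter.eventuallyEq_of_mem (hs.mem_nhds hx) (ih fun k hk => h k (by omega))
    rw [iteratedDeriv_succ, ih'.deriv_eq, deriv_const_mul_field']
    beta_reduce
    rw [h N (by omega) x hx, prod_range_succ, mul_assoc]

lemma iteratedDeriv_sub_one_pow_mul_jacobiP (m N : ℕ) (δ x : ℝ) :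
    iteratedDeriv N (fun t => (t - 1) ^ N * jacobiP m N δ t) x =
      poch (m + 1) N * jacobiP m 0 (δ + N) x := by
  have := iteratedDeriv_eq_prod_mul_of_deriv_eq isOpen_univ
    (f := fun k t => (t - 1) ^ (N - k) * jacobiP m (N - k : ℕ) (δ + k) t)
    (a := fun k => m + N - k) (N := N) ?_ x (Set.mem_univ x)
  · simpa [prod_range_add_sub_eq_poch] using this
  intro k hk x _
  obtain ⟨g, rfl⟩ : ∃ g, N = k + g + 1 := ⟨N - k - 1, by omega⟩
  simp only [show k + g + 1 - k = g + 1 by omega, show k + g + 1 - (k + 1) = g by omega]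
  push_cast
  rw [deriv_sub_one_pow_mul_jacobiP, add_assoc δ]
  ring

lemma iteratedDeriv_add_one_rpow_mul_jacobiP (m N : ℕ) (δ : ℝ) {x : ℝ} (hx : -1 < x) :
    iteratedDeriv N (fun t => (t + 1) ^ (δ + N) * jacobiP m 0 (δ + N) t) x =
      poch (m + δ + 1) N * ((x + 1) ^ δ * jacobiP m N δ x) := by
  have := iteratedDeriv_eq_prod_mul_of_deriv_eq isOpen_Ioi
    (f := fun k t => (t + 1) ^ (δ + N - k) * jacobiP m k (δ + N - k) t)
    (a := fun k => m + δ + N - k) (N := N) ?_ x hx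
  · simpa [prod_range_add_sub_eq_poch] using this
  intro k _ x hx
  rw [deriv_add_one_rpow_mul_jacobiP (by linarith [k.cast_nonneg (α := ℝ)]) m _ hx]
  push_cast
  rw [show δ + N - (k + 1) = δ + N - k - 1 by ring]
  ring

theorem stmt9_general (α : ℕ) (β : ℝ) (n : ℕ) (hn : 1 ≤ n)
    (x : ℝ) (hx : x ∈ Set.Ioo (-1 : ℝ) 1) :
    let A : ℝ := poch ((α : ℝ) + 2) (n - 1) * poch ((α : ℝ) + β + 2) n /
      (2 * Nat.factorial n * poch (β + 1) (n - 1))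
    let R : ℝ → ℝ := fun t => A * (t - 1) * jacobiP (n - 1) ((α : ℝ) + 2) β t
    (x - 1) * (x + 1) ^ (-β) *
        deriv^[α + 2] (fun t => (t + 1) ^ ((α : ℝ) + β + 2) *
          deriv^[α + 2] (fun s => (s - 1) ^ (α + 1) * R s) t) x
      = poch (n : ℝ) (α + 2) * poch ((n : ℝ) + β) (α + 2) * R x := by
  obtain ⟨m, rfl⟩ : ∃ m, n = m + 1 := ⟨n - 1, by omega⟩
  intro A R
  simp only [← iteratedDeriv_eq_iterate]
  have hR : (fun s => (s - 1) ^ (α + 1) * R s) =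
      fun s => A * ((s - 1) ^ (α + 2) * jacobiP m (α + 2 : ℕ) β s) := by
    funext s
    simp only [R, Nat.add_sub_cancel]
    push_cast
    ring
  have hmid : (fun t => (t + 1) ^ ((α : ℝ) + β + 2) *
        iteratedDeriv (α + 2) (fun s => (s - 1) ^ (α + 1) * R s) t) =
      fun t => A * poch (m + 1) (α + 2) *
        ((t + 1) ^ (β + (α + 2 : ℕ)) * jacobiP m 0 (β + (α + 2 : ℕ)) t) := by
    funext t
    rw [hR, iteratedDeriv_const_mul_field, iteratedDeriv_sub_one_pow_mul_jacobiP,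
      show (α : ℝ) + β + 2 = β + (α + 2 : ℕ) by push_cast; ring]
    ring
  have hpow : (x + 1) ^ (-β) * (x + 1) ^ β = 1 := by
    rw [← Real.rpow_add (by linarith [hx.1]), neg_add_cancel, Real.rpow_zero]
  rw [hmid, iteratedDeriv_const_mul_field, iteratedDeriv_add_one_rpow_mul_jacobiP m _ β hx.1]
  simp only [R, Nat.add_sub_cancel]
  push_cast
  rw [add_right_comm _ (1 : ℝ) β]
  linear_combination (x - 1) * A * poch (m + 1) (α + 2) * poch (m + β + 1) (α + 2) *
    jacobiP m (α + 2) β x * hpow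

theorem stmt9 (α : ℕ) (β : ℝ) (hβ : -1 < β) (n : ℕ) (hn : 1 ≤ n)
    (x : ℝ) (hx : x ∈ Set.Ioo (-1 : ℝ) 1) :
    let A : ℝ := poch ((α : ℝ) + 2) (n - 1) * poch ((α : ℝ) + β + 2) n /
      (2 * Nat.factorial n * poch (β + 1) (n - 1))
    let R : ℝ → ℝ := fun t => A * (t - 1) * jacobiP (n - 1) ((α : ℝ) + 2) β t
    (x - 1) * (x + 1) ^ (-β) *
        deriv^[α + 2] (fun t => (t + 1) ^ ((α : ℝ) + β + 2) *
          deriv^[α + 2] (fun s => (s - 1) ^ (α + 1) * R s) t) x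
      = poch (n : ℝ) (α + 2) * poch ((n : ℝ) + β) (α + 2) * R x :=
  stmt9_general α β n hn x hx
end

section
/- For α ∈ ℕ and any C^∞ function y on (−1,1), the ultraspherical-type operator and the Jacobi-type operator with parameters (α, α+2) are linked by (x²−1)·D^{2α+4}[(x²−1)^{α+1}·(x+1)·y(x)] = (x+1)·{(x−1)(x+1)^{−α−2}·D^{α+2}[(x+1)^{2α+4}·D^{α+2}((x−1)^{α+1} y(x))]} for all x ∈ (−1,1). -/
open Finset

lemma iterSmooth {s : Set ℝ} (hs : IsOpen s) {f : ℝ → ℝ}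
    (hf : ContDiffOn ℝ (⊤ : ℕ∞) f s) (k : ℕ) : ContDiffOn ℝ (⊤ : ℕ∞) (deriv^[k] f) s := by
  induction k with
  | zero => exact hf
  | succ k ih =>
    rw [Function.iterate_succ_apply']
    exact ih.deriv_of_isOpen hs (by simp)

lemma iterDiffAt {s : Set ℝ} (hs : IsOpen s) {f : ℝ → ℝ} (hf : ContDiffOn ℝ (⊤ : ℕ∞) f s)
    (k : ℕ) {x : ℝ} (hx : x ∈ s) : DifferentiableAt ℝ (deriv^[k] f) x :=
  ((iterSmooth hs hf k).differentiableOn (by simp)).differentiableAt (hs.mem_nhds hx)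

lemma iterHasDeriv {s : Set ℝ} (hs : IsOpen s) {f : ℝ → ℝ} (hf : ContDiffOn ℝ (⊤ : ℕ∞) f s)
    (k : ℕ) {x : ℝ} (hx : x ∈ s) :
    HasDerivAt (deriv^[k] f) (deriv^[k+1] f x) x := by
  have h := (iterDiffAt hs hf k hx).hasDerivAt
  rwa [← Function.iterate_succ_apply' deriv k f] at h

lemma leibnizPow {s : Set ℝ} (hs : IsOpen s) {f : ℝ → ℝ} (hf : ContDiffOn ℝ (⊤ : ℕ∞) f s)
    (c : ℝ) (m : ℕ) :
    ∀ n, ∀ x ∈ s, deriv^[n] (fun t => (t + c) ^ m * f t) x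
      = ∑ k ∈ Finset.range (n + 1),
          ((n.choose k * m.descFactorial k : ℕ) : ℝ) * (x + c) ^ (m - k) * deriv^[n - k] f x := by
  intro n
  induction n with
  | zero => intro x hx; simp
  | succ n ih =>
    intro x hx
    have hloc : deriv^[n] (fun t => (t + c) ^ m * f t) =ᶠ[nhds x]
        fun z => ∑ k ∈ Finset.range (n + 1),
          ((n.choose k * m.descFactorial k : ℕ) : ℝ) * (z + c) ^ (m - k) * deriv^[n - k] f z := by
      filter_upwards [hs.mem_nhds hx] with z hz using ih z hz
    rw [Function.iterate_succ_apply', hloc.deriv_eq]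
    have hterm : ∀ k ∈ Finset.range (n + 1),
        HasDerivAt (fun z => ((n.choose k * m.descFactorial k : ℕ) : ℝ) * (z + c) ^ (m - k)
            * deriv^[n - k] f z)
          (((n.choose k * m.descFactorial k : ℕ) : ℝ) *
            ((((m - k : ℕ) : ℝ) * (x + c) ^ (m - k - 1)) * deriv^[n - k] f x
              + (x + c) ^ (m - k) * deriv^[n - k + 1] f x)) x := by
      intro k _
      have hp : HasDerivAt (fun z : ℝ => (z + c) ^ (m - k))
          (((m - k : ℕ) : ℝ) * (x + c) ^ (m - k - 1)) x := by
        have := ((hasDerivAt_id x).add_const c).fun_pow (m - k)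
        simpa using this
      have hmul := hp.mul (iterHasDeriv hs hf (n - k) hx)
      have h2 := hmul.const_mul ((n.choose k * m.descFactorial k : ℕ) : ℝ)
      have hfn : (fun z => ((n.choose k * m.descFactorial k : ℕ) : ℝ) * (z + c) ^ (m - k)
            * deriv^[n - k] f z)
          = (fun z => ((n.choose k * m.descFactorial k : ℕ) : ℝ) * ((z + c) ^ (m - k)
            * deriv^[n - k] f z)) := by
        funext z; ring
      rw [hfn]
      exact h2
    have hsum := HasDerivAt.fun_sum hterm
    rw [hsum.deriv]
    set u : ℕ → ℝ := fun j => deriv^[j] f x with hu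
    calc ∑ k ∈ Finset.range (n + 1),
          ((n.choose k * m.descFactorial k : ℕ) : ℝ) *
            ((((m - k : ℕ) : ℝ) * (x + c) ^ (m - k - 1)) * u (n - k)
              + (x + c) ^ (m - k) * deriv^[n - k + 1] f x)
        = (∑ k ∈ Finset.range (n + 1),
            ((n.choose k * m.descFactorial (k + 1) : ℕ) : ℝ) * (x + c) ^ (m - (k + 1)) * u (n - k))
          + ∑ k ∈ Finset.range (n + 1),
            ((n.choose k * m.descFactorial k : ℕ) : ℝ) * (x + c) ^ (m - k) * u (n + 1 - k) := by
          rw [← Finset.sum_add_distrib]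
          apply Finset.sum_congr rfl
          intro k hk
          simp only [Finset.mem_range] at hk
          have hk2 : deriv^[n - k + 1] f x = u (n + 1 - k) := by
            have : n - k + 1 = n + 1 - k := by omega
            rw [this]
          rw [hk2]
          have h1 : m.descFactorial (k + 1) = (m - k) * m.descFactorial k :=
            Nat.descFactorial_succ m k
          have h2 : m - k - 1 = m - (k + 1) := by omega
          rw [h1, h2]
          push_cast
          ring
      _ = ∑ k ∈ Finset.range (n + 2),
            (((n + 1).choose k * m.descFactorial k : ℕ) : ℝ) * (x + c) ^ (m - k) * u (n + 1 - k) := by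
          rw [Finset.sum_range_succ' (fun k =>
            (((n + 1).choose k * m.descFactorial k : ℕ) : ℝ) * (x + c) ^ (m - k) * u (n + 1 - k)) (n+1)]
          simp only [Nat.choose_succ_succ]
          have e1 : ∀ k ∈ Finset.range (n + 1),
              (((n.choose k + n.choose (k+1)) * m.descFactorial (k + 1) : ℕ) : ℝ)
                  * (x + c) ^ (m - (k + 1)) * u (n + 1 - (k + 1))
              = ((n.choose k * m.descFactorial (k + 1) : ℕ) : ℝ) * (x + c) ^ (m - (k + 1)) * u (n - k)
                + ((n.choose (k+1) * m.descFactorial (k + 1) : ℕ) : ℝ)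
                    * (x + c) ^ (m - (k + 1)) * u (n + 1 - (k + 1)) := by
            intro k hk
            simp only [Finset.mem_range] at hk
            have h3 : n + 1 - (k + 1) = n - k := by omega
            rw [h3]
            push_cast
            ring
          rw [Finset.sum_congr rfl e1, Finset.sum_add_distrib]
          have e2 : (∑ k ∈ Finset.range (n + 1),
              ((n.choose (k+1) * m.descFactorial (k + 1) : ℕ) : ℝ)
                * (x + c) ^ (m - (k + 1)) * u (n + 1 - (k + 1)))
              + (((n+1).choose 0 * m.descFactorial 0 : ℕ) : ℝ) * (x + c) ^ (m - 0) * u (n + 1 - 0)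
            = ∑ k ∈ Finset.range (n + 2),
                ((n.choose k * m.descFactorial k : ℕ) : ℝ) * (x + c) ^ (m - k) * u (n + 1 - k) := by
            rw [Finset.sum_range_succ' (fun k =>
              ((n.choose k * m.descFactorial k : ℕ) : ℝ) * (x + c) ^ (m - k) * u (n + 1 - k)) (n+1)]
            norm_num
          rw [add_assoc, e2]
          have e3 : ∑ k ∈ Finset.range (n + 2),
              ((n.choose k * m.descFactorial k : ℕ) : ℝ) * (x + c) ^ (m - k) * u (n + 1 - k)
            = ∑ k ∈ Finset.range (n + 1),
              ((n.choose k * m.descFactorial k : ℕ) : ℝ) * (x + c) ^ (m - k) * u (n + 1 - k) := by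
            rw [Finset.sum_range_succ]
            simp [Nat.choose_eq_zero_of_lt (by omega : n < n + 1)]
          rw [e3]

theorem stmt16 (α : ℕ) (y : ℝ → ℝ) (hy : ContDiffOn ℝ (⊤ : ℕ∞) y (Set.Ioo (-1) 1))
    (x : ℝ) (hx : x ∈ Set.Ioo (-1 : ℝ) 1) :
    (x ^ 2 - 1) * deriv^[2 * α + 4] (fun t => (t ^ 2 - 1) ^ (α + 1) * ((t + 1) * y t)) x
      = (x + 1) * ((x - 1) * ((x + 1) ^ (α + 2))⁻¹ *
          deriv^[α + 2] (fun t => (t + 1) ^ (2 * α + 4) *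
            deriv^[α + 2] (fun s => (s - 1) ^ (α + 1) * y s) t) x) := by
  have hsIoo : IsOpen (Set.Ioo (-1 : ℝ) 1) := isOpen_Ioo
  set g : ℝ → ℝ := fun s => (s - 1) ^ (α + 1) * y s with hg
  have hgsm : ContDiffOn ℝ (⊤ : ℕ∞) g (Set.Ioo (-1) 1) :=
    (((contDiff_id.sub contDiff_const).pow (α + 1)).contDiffOn).mul hy
  have hfun : (fun t : ℝ => (t ^ 2 - 1) ^ (α + 1) * ((t + 1) * y t))
      = fun t => (t + 1) ^ (α + 2) * g t := by
    funext t
    have h : t ^ 2 - 1 = (t - 1) * (t + 1) := by ring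
    rw [hg, h, mul_pow]
    ring
  set S : ℝ := ∑ k ∈ Finset.range (α + 3),
      (((2 * α + 4).choose k * (α + 2).descFactorial k : ℕ) : ℝ) * (x + 1) ^ (α + 2 - k)
        * deriv^[2 * α + 4 - k] g x
      with hS
  -- LHS
  have hL : deriv^[2 * α + 4] (fun t => (t + 1) ^ (α + 2) * g t) x = S := by
    rw [leibnizPow hsIoo hgsm 1 (α + 2) (2 * α + 4) x hx, hS]
    refine (Finset.sum_subset (Finset.range_subset_range.mpr (by omega)) ?_).symm
    intro k hk1 hk2
    simp only [Finset.mem_range] at hk1 hk2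
    rw [Nat.descFactorial_eq_zero_iff_lt.mpr (by omega : α + 2 < k)]
    simp
  -- RHS
  have hGsm : ContDiffOn ℝ (⊤ : ℕ∞) (deriv^[α + 2] g) (Set.Ioo (-1) 1) := iterSmooth hsIoo hgsm (α + 2)
  have hpow : (0 : ℝ) < x + 1 := by
    have := hx.1; linarith
  have hne : ((x + 1 : ℝ) ^ (α + 2)) ≠ 0 := pow_ne_zero _ (ne_of_gt hpow)
  have hR : deriv^[α + 2] (fun t => (t + 1) ^ (2 * α + 4) * deriv^[α + 2] g t) x
      = (x + 1) ^ (α + 2) * S := by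
    rw [leibnizPow hsIoo hGsm 1 (2 * α + 4) (α + 2) x hx, hS, Finset.mul_sum]
    apply Finset.sum_congr rfl
    intro k hk
    simp only [Finset.mem_range] at hk
    have hcomp : deriv^[α + 2 - k] (deriv^[α + 2] g) x = deriv^[2 * α + 4 - k] g x := by
      rw [← Function.iterate_add_apply deriv (α + 2 - k) (α + 2) g,
        (by omega : α + 2 - k + (α + 2) = 2 * α + 4 - k)]
    have hc : (α + 2).choose k * (2 * α + 4).descFactorial k
        = (2 * α + 4).choose k * (α + 2).descFactorial k := by
      rw [Nat.descFactorial_eq_factorial_mul_choose, Nat.descFactorial_eq_factorial_mul_choose]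
      ring
    have hp : (x + 1 : ℝ) ^ (2 * α + 4 - k) = (x + 1) ^ (α + 2) * (x + 1) ^ (α + 2 - k) := by
      rw [← pow_add]
      congr 1
      omega
    rw [hcomp, hc, hp]
    ring
  rw [hfun, hL, hR]
  field_simp
  ring
end

section
/- Let δ = ξ^{-1}D be the Bessel derivative. For every j, m ∈ ℕ with j ≤ m and every smooth φ on (0,∞), δ^j[ξ^{2m+1}·δ^{m+1}φ(ξ)] = Σ_{k=j}^{m} ((−2)^{k−m}·(2m−k−j)!/((m−k)!·(k−j)!))·ξ^{k−j}·D^{k+j+1}φ(ξ) for all ξ > 0. -/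
open Set Finset

noncomputable def cg (m j i : ℕ) : ℝ :=
  (-2 : ℝ) ^ ((j : ℤ) + (i : ℤ) - (m : ℤ)) * (Nat.factorial (2*m - 2*j - i) : ℝ) /
    ((Nat.factorial (m - j - i) : ℝ) * (Nat.factorial i : ℝ))

lemma iterDeriv_contDiffOn {φ : ℝ → ℝ} (hφ : ContDiffOn ℝ (⊤ : ℕ∞) φ (Ioi 0)) (n : ℕ) :
    ContDiffOn ℝ (⊤ : ℕ∞) (deriv^[n] φ) (Ioi 0) := by
  induction n with
  | zero => exact hφ
  | succ n ih =>
    rw [Function.iterate_succ_apply']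
    exact ih.deriv_of_isOpen isOpen_Ioi (by simp)

lemma hasDerivAt_iter {φ : ℝ → ℝ} (hφ : ContDiffOn ℝ (⊤ : ℕ∞) φ (Ioi 0)) (n : ℕ) {ξ : ℝ}
    (hξ : 0 < ξ) : HasDerivAt (deriv^[n] φ) (deriv^[n+1] φ ξ) ξ := by
  have h : DifferentiableAt ℝ (deriv^[n] φ) ξ :=
    ((iterDeriv_contDiffOn hφ n).differentiableOn (by simp)).differentiableAt
      (isOpen_Ioi.mem_nhds hξ)
  have := h.hasDerivAt
  rwa [show deriv^[n+1] φ = deriv (deriv^[n] φ) from Function.iterate_succ_apply' deriv n φ]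

lemma hasDerivAt_sumform {φ : ℝ → ℝ} (hφ : ContDiffOn ℝ (⊤ : ℕ∞) φ (Ioi 0)) (s : Finset ℕ)
    (a : ℕ → ℝ) (e d : ℕ → ℕ) {ξ : ℝ} (hξ : 0 < ξ) :
    HasDerivAt (fun t => ∑ i ∈ s, a i * t ^ e i * deriv^[d i] φ t)
      (∑ i ∈ s, (a i * ((e i : ℝ) * ξ ^ (e i - 1)) * deriv^[d i] φ ξ
          + a i * ξ ^ e i * deriv^[d i + 1] φ ξ)) ξ := by
  apply HasDerivAt.fun_sum
  intro i _
  exact ((hasDerivAt_pow (e i) ξ).const_mul (a i)).mul (hasDerivAt_iter hφ (d i) hξ)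

lemma deriv_congr_Ioi {f g : ℝ → ℝ} (h : ∀ t ∈ Ioi (0:ℝ), f t = g t) {ξ : ℝ} (hξ : 0 < ξ) :
    deriv f ξ = deriv g ξ :=
  Filter.EventuallyEq.deriv_eq (Filter.eventuallyEq_of_mem (isOpen_Ioi.mem_nhds hξ) h)

lemma fact_ne (n : ℕ) : (Nat.factorial n : ℝ) ≠ 0 := Nat.cast_ne_zero.mpr (Nat.factorial_ne_zero n)

lemma fact_cast (a b : ℕ) (h : a = b + 1) :
    (Nat.factorial a : ℝ) = ((b:ℝ)+1) * (Nat.factorial b : ℝ) := by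
  subst h; rw [Nat.factorial_succ]; push_cast; ring

lemma I1 (m j i : ℕ) (h : j + i + 2 ≤ m) :
    cg m (j+1) i = cg m j (i+2) * ((i:ℝ)+2) + cg m j (i+1) := by
  obtain ⟨q, rfl⟩ : ∃ q, m = j + i + 2 + q := ⟨m - (j+i+2), by omega⟩
  unfold cg
  rw [show 2*(j+i+2+q) - 2*(j+1) - i = i+2+2*q by omega,
      show (j+i+2+q) - (j+1) - i = q+1 by omega,
      show 2*(j+i+2+q) - 2*j - (i+2) = i+2+2*q by omega,
      show (j+i+2+q) - j - (i+2) = q by omega,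
      show 2*(j+i+2+q) - 2*j - (i+1) = i+3+2*q by omega,
      show (j+i+2+q) - j - (i+1) = q+1 by omega,
      show ((j+1:ℕ):ℤ) + (i:ℤ) - ((j+i+2+q:ℕ):ℤ) = -((q+1:ℕ):ℤ) by push_cast; ring,
      show (j:ℤ) + ((i+2:ℕ):ℤ) - ((j+i+2+q:ℕ):ℤ) = -((q:ℕ):ℤ) by push_cast; ring,
      show (j:ℤ) + ((i+1:ℕ):ℤ) - ((j+i+2+q:ℕ):ℤ) = -((q+1:ℕ):ℤ) by push_cast; ring,
      zpow_neg, zpow_neg, zpow_natCast, zpow_natCast,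
      fact_cast (i+3+2*q) (i+2+2*q) (by ring),
      fact_cast (i+2) (i+1) (by ring), fact_cast (i+1) i (by ring),
      fact_cast (q+1) q rfl]
  have h2 : ((-2:ℝ))^(q+1) ≠ 0 := by positivity
  have h3 : ((-2:ℝ))^q ≠ 0 := by positivity
  field_simp [fact_ne]
  push_cast
  ring

lemma I2 (m j : ℕ) (h : j < m) : cg m j 1 + cg m j 0 = 0 := by
  obtain ⟨q, rfl⟩ : ∃ q, m = j + 1 + q := ⟨m - (j+1), by omega⟩
  unfold cg
  rw [show 2*(j+1+q) - 2*j - 1 = 1+2*q by omega,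
      show (j+1+q) - j - 1 = q by omega,
      show 2*(j+1+q) - 2*j - 0 = 2+2*q by omega,
      show (j+1+q) - j - 0 = q+1 by omega,
      show (j:ℤ) + ((1:ℕ):ℤ) - ((j+1+q:ℕ):ℤ) = -((q:ℕ):ℤ) by push_cast; ring,
      show (j:ℤ) + ((0:ℕ):ℤ) - ((j+1+q:ℕ):ℤ) = -((q+1:ℕ):ℤ) by push_cast; ring,
      zpow_neg, zpow_neg, zpow_natCast, zpow_natCast,
      fact_cast (2+2*q) (1+2*q) (by ring), fact_cast (q+1) q rfl]
  have h2 : ((-2:ℝ))^(q+1) ≠ 0 := by positivity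
  have h3 : ((-2:ℝ))^q ≠ 0 := by positivity
  field_simp [fact_ne, Nat.factorial]
  push_cast
  ring

lemma I3a (m j : ℕ) (h : j ≤ m) : cg m j (m - j) = 1 := by
  obtain ⟨q, rfl⟩ : ∃ q, m = j + q := ⟨m - j, by omega⟩
  rw [show (j+q) - j = q by omega]
  unfold cg
  rw [show 2*(j+q) - 2*j - q = q by omega,
      show (j+q) - j - q = 0 by omega,
      show (j:ℤ) + ((q:ℕ):ℤ) - ((j+q:ℕ):ℤ) = 0 by push_cast; ring]
  rw [zpow_zero, Nat.factorial_zero]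
  field_simp [fact_ne]
  norm_num

lemma I4 (m i : ℕ) (h : i + 1 ≤ m) :
    cg (m+1) 0 (i+1) = cg m 0 (i+1) * (((i:ℝ)+1) - (2*(m:ℝ)+1)) + cg m 0 i := by
  obtain ⟨q, rfl⟩ : ∃ q, m = i + 1 + q := ⟨m - (i+1), by omega⟩
  unfold cg
  rw [show 2*((i+1+q)+1) - 2*0 - (i+1) = i+3+2*q by omega,
      show ((i+1+q)+1) - 0 - (i+1) = q+1 by omega,
      show 2*(i+1+q) - 2*0 - (i+1) = i+1+2*q by omega,
      show (i+1+q) - 0 - (i+1) = q by omega,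
      show 2*(i+1+q) - 2*0 - i = i+2+2*q by omega,
      show (i+1+q) - 0 - i = q+1 by omega,
      show ((0:ℕ):ℤ) + ((i+1:ℕ):ℤ) - (((i+1+q)+1:ℕ):ℤ) = -((q+1:ℕ):ℤ) by push_cast; ring,
      show ((0:ℕ):ℤ) + ((i+1:ℕ):ℤ) - ((i+1+q:ℕ):ℤ) = -((q:ℕ):ℤ) by push_cast; ring,
      show ((0:ℕ):ℤ) + ((i:ℕ):ℤ) - ((i+1+q:ℕ):ℤ) = -((q+1:ℕ):ℤ) by push_cast; ring,
      zpow_neg, zpow_neg, zpow_natCast, zpow_natCast,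
      fact_cast (i+3+2*q) (i+2+2*q) (by ring),
      fact_cast (i+2+2*q) (i+1+2*q) (by ring),
      fact_cast (i+1) i (by ring),
      fact_cast (q+1) q rfl]
  have h2 : ((-2:ℝ))^(q+1) ≠ 0 := by positivity
  have h3 : ((-2:ℝ))^q ≠ 0 := by positivity
  field_simp [fact_ne]
  push_cast
  ring

lemma I5 (m : ℕ) : cg (m+1) 0 0 = cg m 0 0 * (-(2*(m:ℝ)+1)) := by
  unfold cg
  rw [show 2*(m+1) - 2*0 - 0 = (2*m+1)+1 by omega,
      show (m+1) - 0 - 0 = m+1 by omega,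
      show 2*m - 2*0 - 0 = 2*m by omega, show m - 0 - 0 = m by omega,
      show ((0:ℕ):ℤ) + ((0:ℕ):ℤ) - ((m+1:ℕ):ℤ) = -((m+1:ℕ):ℤ) by push_cast; ring,
      show ((0:ℕ):ℤ) + ((0:ℕ):ℤ) - ((m:ℕ):ℤ) = -((m:ℕ):ℤ) by push_cast; ring,
      zpow_neg, zpow_neg, zpow_natCast, zpow_natCast,
      fact_cast ((2*m+1)+1) (2*m+1) rfl, fact_cast (2*m+1) (2*m) rfl,
      fact_cast (m+1) m rfl]
  have h2 : ((-2:ℝ))^(m+1) ≠ 0 := by positivity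
  have h3 : ((-2:ℝ))^m ≠ 0 := by positivity
  field_simp [fact_ne]
  push_cast
  ring

lemma pow_pred_mul (i : ℕ) (ξ : ℝ) : (i:ℝ) * ξ ^ (i-1) * ξ = (i:ℝ) * ξ ^ i := by
  cases i with
  | zero => simp
  | succ n => simp [pow_succ]; ring



lemma lemA {φ : ℝ → ℝ} (hφ : ContDiffOn ℝ (⊤ : ℕ∞) φ (Ioi 0)) (m : ℕ) :
    ∀ ξ > 0, besselD^[m+1] φ ξ * ξ^(2*m+1)
      = ∑ i ∈ range (m+1), cg m 0 i * ξ^i * deriv^[i+1] φ ξ := by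
  induction m with
  | zero =>
    intro ξ hξ
    have : cg 0 0 0 = 1 := by simp [cg, Nat.factorial]
    simp [besselD, this, div_mul_cancel₀ _ (ne_of_gt hξ)]
  | succ m ih =>
    intro ξ hξ
    have hξ0 : ξ ≠ 0 := ne_of_gt hξ
    have hS : HasDerivAt (fun t => (∑ i ∈ range (m+1), cg m 0 i * t^i * deriv^[i+1] φ t)
          / t^(2*m+1))
        (((∑ i ∈ range (m+1), (cg m 0 i * ((i:ℝ) * ξ ^ (i-1)) * deriv^[i+1] φ ξ
            + cg m 0 i * ξ ^ i * deriv^[i+2] φ ξ)) * ξ^(2*m+1)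
          - (∑ i ∈ range (m+1), cg m 0 i * ξ^i * deriv^[i+1] φ ξ)
              * ((2*m+1:ℕ) * ξ^(2*m))) / (ξ^(2*m+1))^2) ξ := by
      have h1 := hasDerivAt_sumform hφ (range (m+1)) (cg m 0) id (fun i => i+1) hξ
      simp only [id] at h1
      exact h1.div (hasDerivAt_pow (2*m+1) ξ) (pow_ne_zero _ hξ0)
    have hEq : deriv (besselD^[m+1] φ) ξ
        = deriv (fun t => (∑ i ∈ range (m+1), cg m 0 i * t^i * deriv^[i+1] φ t) / t^(2*m+1)) ξ := by
      apply deriv_congr_Ioi (fun t ht => ?_) hξ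
      rw [← ih t ht, mul_div_cancel_right₀ _ (pow_ne_zero _ (ne_of_gt ht))]
    have key : (∑ i ∈ range (m+1), (cg m 0 i * ((i:ℝ) * ξ ^ (i-1)) * deriv^[i+1] φ ξ
            + cg m 0 i * ξ ^ i * deriv^[i+2] φ ξ)) * ξ
          - (2*(m:ℝ)+1) * (∑ i ∈ range (m+1), cg m 0 i * ξ^i * deriv^[i+1] φ ξ)
        = ∑ i ∈ range (m+2), cg (m+1) 0 i * ξ^i * deriv^[i+1] φ ξ := by
      rw [sum_mul, mul_sum, ← sum_sub_distrib]
      have e1 : ∀ i ∈ range (m+1),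
          (cg m 0 i * ((i:ℝ) * ξ ^ (i-1)) * deriv^[i+1] φ ξ
            + cg m 0 i * ξ ^ i * deriv^[i+2] φ ξ) * ξ
            - (2*(m:ℝ)+1) * (cg m 0 i * ξ^i * deriv^[i+1] φ ξ)
          = (cg m 0 i * ((i:ℝ) - (2*(m:ℝ)+1)) * ξ^i * deriv^[i+1] φ ξ)
            + cg m 0 i * ξ^(i+1) * deriv^[i+2] φ ξ := by
        intro i _
        have hp := pow_pred_mul i ξ
        have hq : ξ^(i+1) = ξ^i * ξ := pow_succ ξ i
        linear_combination (cg m 0 i * deriv^[i+1] φ ξ) * hp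
          - (cg m 0 i * deriv^[i+2] φ ξ) * hq
      rw [sum_congr rfl e1, sum_add_distrib,
        sum_range_succ' (fun i => cg m 0 i * ((i:ℝ) - (2*(m:ℝ)+1)) * ξ^i * deriv^[i+1] φ ξ) m,
        sum_range_succ (fun i => cg m 0 i * ξ^(i+1) * deriv^[i+2] φ ξ) m,
        sum_range_succ (fun i => cg (m+1) 0 i * ξ^i * deriv^[i+1] φ ξ) (m+1),
        sum_range_succ' (fun i => cg (m+1) 0 i * ξ^i * deriv^[i+1] φ ξ) m]
      have hm : cg m 0 m * ξ^(m+1) * deriv^[m+2] φ ξ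
          = cg (m+1) 0 (m+1) * ξ^(m+1) * deriv^[m+1+1] φ ξ := by
        have a1 := I3a (m+1) 0 (by omega)
        have a2 := I3a m 0 (by omega)
        simp only [Nat.sub_zero] at a1 a2
        rw [a1, a2]
      have e0 : cg m 0 0 * (((0:ℕ):ℝ) - (2*(m:ℝ)+1)) * ξ^(0:ℕ) * deriv^[0+1] φ ξ
          = cg (m+1) 0 0 * ξ^(0:ℕ) * deriv^[0+1] φ ξ := by
        rw [I5 m]; push_cast; ring
      have hsum : ∑ i ∈ range m,
            cg m 0 (i+1) * (((i+1:ℕ):ℝ) - (2*(m:ℝ)+1)) * ξ^(i+1) * deriv^[i+1+1] φ ξ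
          + ∑ i ∈ range m, cg m 0 i * ξ^(i+1) * deriv^[i+2] φ ξ
          = ∑ i ∈ range m, cg (m+1) 0 (i+1) * ξ^(i+1) * deriv^[i+1+1] φ ξ := by
        rw [← sum_add_distrib]
        refine sum_congr rfl fun i hi => ?_
        rw [show i+1+1 = i+2 from rfl]
        have hI := I4 m i (by simp at hi; omega)
        push_cast
        linear_combination (-(ξ^(i+1) * deriv^[i+2] φ ξ)) * hI
      linear_combination hsum + e0 + hm
    rw [show m+1+1 = (m+1)+1 from rfl, Function.iterate_succ_apply' besselD (m+1) φ]
    show deriv (besselD^[m+1] φ) ξ / ξ * ξ^(2*(m+1)+1) = _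
    rw [hEq, hS.deriv]
    set P := ∑ i ∈ range (m+1), (cg m 0 i * ((i:ℝ) * ξ ^ (i-1)) * deriv^[i+1] φ ξ
            + cg m 0 i * ξ ^ i * deriv^[i+2] φ ξ) with hPdef
    set Q := ∑ i ∈ range (m+1), cg m 0 i * ξ^i * deriv^[i+1] φ ξ with hQdef
    set R := ∑ i ∈ range (m+2), cg (m+1) 0 i * ξ^i * deriv^[i+1] φ ξ with hRdef
    have hX : (P * ξ^(2*m+1) - Q * ((2*m+1:ℕ) * ξ^(2*m))) / (ξ^(2*m+1))^2
        = (P * ξ - (2*(m:ℝ)+1) * Q) / ξ^(2*m+2) := by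
      rw [div_eq_div_iff (pow_ne_zero 2 (pow_ne_zero _ hξ0)) (pow_ne_zero _ hξ0)]
      push_cast
      ring
    rw [hX, key, div_div, ← pow_succ]
    rw [show 2*m+2+1 = 2*(m+1)+1 by ring]
    exact div_mul_cancel₀ R (pow_ne_zero _ hξ0)

lemma lemB {φ : ℝ → ℝ} (hφ : ContDiffOn ℝ (⊤ : ℕ∞) φ (Ioi 0)) (m : ℕ) :
    ∀ j ≤ m, ∀ ξ > 0,
      besselD^[j] (fun t => t ^ (2*m+1) * besselD^[m+1] φ t) ξ
        = ∑ i ∈ range (m - j + 1), cg m j i * ξ^i * deriv^[2*j+i+1] φ ξ := by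
  intro j
  induction j with
  | zero =>
    intro _ ξ hξ
    have h := lemA hφ m ξ hξ
    simp only [Function.iterate_zero_apply, Nat.sub_zero]
    rw [mul_comm, h]
    exact sum_congr rfl fun i _ => by norm_num
  | succ j ihj =>
    intro hj ξ hξ
    have hjm : j ≤ m := by omega
    have hξ0 : ξ ≠ 0 := ne_of_gt hξ
    obtain ⟨p, hp⟩ : ∃ p, m - j = p + 1 := ⟨m - j - 1, by omega⟩
    -- derivative of level-j expression
    have hG : HasDerivAt (fun t => ∑ i ∈ range (m - j + 1), cg m j i * t^i * deriv^[2*j+i+1] φ t)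
        (∑ i ∈ range (m - j + 1), (cg m j i * ((i:ℝ) * ξ ^ (i-1)) * deriv^[2*j+i+1] φ ξ
            + cg m j i * ξ ^ i * deriv^[2*j+i+2] φ ξ)) ξ := by
      have h1 := hasDerivAt_sumform hφ (range (m - j + 1)) (cg m j) id (fun i => 2*j+i+1) hξ
      simp only [id] at h1
      convert h1 using 2
    have hEq : deriv (besselD^[j] (fun t => t ^ (2*m+1) * besselD^[m+1] φ t)) ξ
        = ∑ i ∈ range (m - j + 1), (cg m j i * ((i:ℝ) * ξ ^ (i-1)) * deriv^[2*j+i+1] φ ξ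
            + cg m j i * ξ ^ i * deriv^[2*j+i+2] φ ξ) := by
      rw [deriv_congr_Ioi (fun t ht => ihj hjm t ht) hξ, hG.deriv]
    rw [Function.iterate_succ_apply' besselD j _]
    show deriv (besselD^[j] (fun t => t ^ (2*m+1) * besselD^[m+1] φ t)) ξ / ξ = _
    rw [hEq, div_eq_iff hξ0]
    -- algebra
    rw [show m - (j+1) = p by omega, hp]
    rw [sum_mul]
    have eL : ∀ i ∈ range (p+1),
        cg m (j+1) i * ξ^i * deriv^[2*(j+1)+i+1] φ ξ * ξ
          = cg m (j+1) i * ξ^(i+1) * deriv^[2*j+(i+1)+2] φ ξ := by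
      intro i _
      rw [show 2*(j+1)+i+1 = 2*j+(i+1)+2 by ring, pow_succ]
      ring
    rw [sum_congr rfl eL]
    -- RHS: split
    rw [sum_add_distrib,
      sum_range_succ' (fun i => cg m j i * ((i:ℝ) * ξ ^ (i-1)) * deriv^[2*j+i+1] φ ξ) (p+1),
      sum_range_succ (fun i => cg m j i * ξ ^ i * deriv^[2*j+i+2] φ ξ) (p+1),
      sum_range_succ (fun i => cg m (j+1) i * ξ^(i+1) * deriv^[2*j+(i+1)+2] φ ξ) p]
    -- bottom term of first RHS sum is zero
    have hz : cg m j 0 * (((0:ℕ):ℝ) * ξ ^ (0-1)) * deriv^[2*j+0+1] φ ξ = 0 := by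
      norm_num
    -- top terms match
    have htop : cg m (j+1) p * ξ^(p+1) * deriv^[2*j+(p+1)+2] φ ξ
        = cg m j (p+1) * ξ^(p+1) * deriv^[2*j+(p+1)+2] φ ξ := by
      have a1 := I3a m (j+1) (by omega)
      have a2 := I3a m j hjm
      rw [show m - (j+1) = p by omega] at a1
      rw [hp] at a2
      rw [a1, a2]
    -- middle sums
    have hmid : ∑ i ∈ range (p+1),
          cg m j (i+1) * (((i+1:ℕ):ℝ) * ξ ^ ((i+1)-1)) * deriv^[2*j+(i+1)+1] φ ξ
        + ∑ i ∈ range (p+1), cg m j i * ξ ^ i * deriv^[2*j+i+2] φ ξ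
        = ∑ i ∈ range p, cg m (j+1) i * ξ^(i+1) * deriv^[2*j+(i+1)+2] φ ξ := by
      rw [← sum_add_distrib]
      have e2 : ∀ i ∈ range (p+1),
          cg m j (i+1) * (((i+1:ℕ):ℝ) * ξ ^ ((i+1)-1)) * deriv^[2*j+(i+1)+1] φ ξ
            + cg m j i * ξ ^ i * deriv^[2*j+i+2] φ ξ
          = (cg m j (i+1) * ((i:ℝ)+1) + cg m j i) * ξ^i * deriv^[2*j+i+2] φ ξ := by
        intro i _
        rw [show (i+1)-1 = i from rfl, show 2*j+(i+1)+1 = 2*j+i+2 by ring]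
        push_cast
        ring
      rw [sum_congr rfl e2,
        sum_range_succ' (fun i => (cg m j (i+1) * ((i:ℝ)+1) + cg m j i) * ξ^i * deriv^[2*j+i+2] φ ξ) p]
      have h0 : (cg m j (0+1) * (((0:ℕ):ℝ)+1) + cg m j 0) * ξ^(0:ℕ) * deriv^[2*j+0+2] φ ξ = 0 := by
        have h2 := I2 m j (by omega)
        push_cast
        linear_combination (ξ^(0:ℕ) * deriv^[2*j+0+2] φ ξ) * h2
      have hterm : ∑ i ∈ range p,
            (cg m j (i+1+1) * (((i+1:ℕ):ℝ)+1) + cg m j (i+1)) * ξ^(i+1) * deriv^[2*j+(i+1)+2] φ ξ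
          = ∑ i ∈ range p, cg m (j+1) i * ξ^(i+1) * deriv^[2*j+(i+1)+2] φ ξ := by
        refine sum_congr rfl fun i hi => ?_
        have hI := I1 m j i (by simp at hi; omega)
        rw [show i+1+1 = i+2 by omega]
        push_cast
        linear_combination (-(ξ^(i+1) * deriv^[2*j+(i+1)+2] φ ξ)) * hI
      linear_combination hterm + h0
    linear_combination hmid + hz - htop

theorem stmt17 (j m : ℕ) (hjm : j ≤ m) (φ : ℝ → ℝ)
    (hφ : ContDiffOn ℝ (⊤ : ℕ∞) φ (Set.Ioi 0)) (ξ : ℝ) (hξ : 0 < ξ) :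
    besselD^[j] (fun t => t ^ (2 * m + 1) * besselD^[m + 1] φ t) ξ
      = ∑ k ∈ Finset.Icc j m,
          ((-2 : ℝ) ^ ((k : ℤ) - (m : ℤ)) * (Nat.factorial (2 * m - k - j) : ℝ) /
              ((Nat.factorial (m - k) : ℝ) * (Nat.factorial (k - j) : ℝ))) *
            ξ ^ (k - j) * deriv^[k + j + 1] φ ξ := by
  have h := lemB hφ m j hjm ξ hξ
  rw [h, ← Finset.Ico_add_one_right_eq_Icc, Finset.sum_Ico_eq_sum_range]
  refine Finset.sum_congr (by rw [show m + 1 - j = m - j + 1 by omega]) fun i _ => ?_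
  rw [show (j+i) - j = i by omega, show 2*m - (j+i) - j = 2*m - 2*j - i by omega,
      show m - (j+i) = m - j - i by omega, show (j+i) + j + 1 = 2*j + i + 1 by omega,
      show ((j+i:ℕ):ℤ) - (m:ℤ) = (j:ℤ) + (i:ℤ) - (m:ℤ) by push_cast; ring]
  rfl
end
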